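/- arXiv:1607.04042 — 8 statements merged into one kernel-verified Lean document; each statement's English description precedes it below -/
import Mathlib

section
/- Let n, l be natural numbers, let ε > 0 and let D ⊂ ℝⁿ be the closed ball of radius ε centered at the origin. Let f, g₁, …, g_l : ℝⁿ → ℝ be C^∞ functions, and for λ = (λ₀, λ₁, …, λ_l) ∈ ℝ^{l+1} define the perturbation f_λ(x) = f(x) − λ₀ − λ₁ g₁(x) − ⋯ − λ_l g_l(x). Assume that the origin is the only critical point of f in D, that f(0) = 0, and that f has a local minimum at the origin. Call λ nondiscriminant if f_λ has no critical point x ∈ D with f_λ(x) = 0. Then there exists δ > 0 such that any two parameters λ, λ' with |λ| < δ and |λ'| < δ, each having the property that every critical point x ∈ D of the corresponding perturbation has strictly positive critical value (f_λ(x) > 0, respectively f_{λ'}(x) > 0), can be joined by a continuous path in ℝ^{l+1} consisting entirely of nondiscriminant parameters. -/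
lemma coord_abs_le_norm {m : ℕ} (x : EuclideanSpace ℝ (Fin m)) (j : Fin m) :
    |x j| ≤ ‖x‖ := by
  rw [EuclideanSpace.norm_eq, ← Real.sqrt_sq_eq_abs]
  apply Real.sqrt_le_sqrt
  have h : (x j) ^ 2 = ‖x j‖ ^ 2 := by rw [Real.norm_eq_abs, sq_abs]
  rw [h]
  exact Finset.single_le_sum (f := fun i => ‖x i‖ ^ 2)
    (fun i _ => by positivity) (Finset.mem_univ j)

lemma tail_fderiv_eq {n l : ℕ} (f : EuclideanSpace ℝ (Fin n) → ℝ)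
    (g : Fin l → EuclideanSpace ℝ (Fin n) → ℝ)
    (μ ν : EuclideanSpace ℝ (Fin (l + 1)))
    (h : ∀ i : Fin l, μ i.succ = ν i.succ) (x : EuclideanSpace ℝ (Fin n)) :
    fderiv ℝ (fun y => f y - μ 0 - ∑ i : Fin l, μ i.succ * g i y) x
      = fderiv ℝ (fun y => f y - ν 0 - ∑ i : Fin l, ν i.succ * g i y) x := by
  have key : (fun y => f y - μ 0 - ∑ i : Fin l, μ i.succ * g i y)
      = fun y => (f y - ν 0 - ∑ i : Fin l, ν i.succ * g i y) + (ν 0 - μ 0) := by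
    funext y
    have hs : ∑ i : Fin l, μ i.succ * g i y = ∑ i : Fin l, ν i.succ * g i y :=
      Finset.sum_congr rfl fun i _ => by rw [h i]
    rw [hs]; ring
  rw [key, fderiv_add_const]

lemma joinedIn_segment {E : Type*} [NormedAddCommGroup E] [NormedSpace ℝ E] {s : Set E}
    (a b : E) (h : ∀ t : ℝ, t ∈ Set.Icc (0 : ℝ) 1 → (1 - t) • a + t • b ∈ s) :
    JoinedIn s a b := by
  refine ⟨⟨⟨fun t => (1 - (t : ℝ)) • a + (t : ℝ) • b, by fun_prop⟩, by simp, by simp⟩,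
    fun t => h t ⟨t.2.1, t.2.2⟩⟩

/-- For a smooth function `f` on `ℝⁿ` with a local minimum at the origin,
`f 0 = 0`, and no other critical points in the closed ball `D` of radius `ε`,
consider the deformation `f_λ(x) = f x - λ₀ - ∑ i, λᵢ₊₁ * gᵢ x`.  Then there is `δ > 0`
such that any two parameters of norm `< δ` whose perturbations have only critical points
(in `D`) with strictly positive critical values can be joined by a continuous path of
nondiscriminant parameters. -/
theorem stmt0 (n l : ℕ) (ε : ℝ) (hε : 0 < ε)
    (f : EuclideanSpace ℝ (Fin n) → ℝ) (g : Fin l → EuclideanSpace ℝ (Fin n) → ℝ)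
    (hf : ContDiff ℝ (⊤ : ℕ∞) f) (hg : ∀ i, ContDiff ℝ (⊤ : ℕ∞) (g i))
    (hcrit : ∀ x ∈ Metric.closedBall (0 : EuclideanSpace ℝ (Fin n)) ε,
      fderiv ℝ f x = 0 → x = 0)
    (hf0 : f 0 = 0) (hmin : IsLocalMin f 0) :
    ∃ δ > (0 : ℝ), ∀ lam lam' : EuclideanSpace ℝ (Fin (l + 1)),
      ‖lam‖ < δ → ‖lam'‖ < δ →
      (∀ x ∈ Metric.closedBall (0 : EuclideanSpace ℝ (Fin n)) ε,
        fderiv ℝ (fun y => f y - lam 0 - ∑ i : Fin l, lam i.succ * g i y) x = 0 →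
        0 < f x - lam 0 - ∑ i : Fin l, lam i.succ * g i x) →
      (∀ x ∈ Metric.closedBall (0 : EuclideanSpace ℝ (Fin n)) ε,
        fderiv ℝ (fun y => f y - lam' 0 - ∑ i : Fin l, lam' i.succ * g i y) x = 0 →
        0 < f x - lam' 0 - ∑ i : Fin l, lam' i.succ * g i x) →
      JoinedIn {μ : EuclideanSpace ℝ (Fin (l + 1)) |
        ¬ ∃ x ∈ Metric.closedBall (0 : EuclideanSpace ℝ (Fin n)) ε,
          fderiv ℝ (fun y => f y - μ 0 - ∑ i : Fin l, μ i.succ * g i y) x = 0 ∧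
          f x - μ 0 - ∑ i : Fin l, μ i.succ * g i x = 0} lam lam' := by
  classical
  set D := Metric.closedBall (0 : EuclideanSpace ℝ (Fin n)) ε with hDdef
  have hDc : IsCompact D := isCompact_closedBall _ _
  have hD0 : (0 : EuclideanSpace ℝ (Fin n)) ∈ D := by
    simp [hDdef, hε.le]
  obtain ⟨x₀, hx₀D, hx₀'⟩ := hDc.exists_isMinOn ⟨0, hD0⟩ hf.continuous.continuousOn
  have hx₀ : ∀ x ∈ D, f x₀ ≤ f x := fun x hx => hx₀' hx
  choose B hB using fun i =>
    hDc.exists_bound_of_continuousOn (hg i).continuous.continuousOn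
  set K := ∑ i, B i with hKdef
  have hK0 : 0 ≤ K := Finset.sum_nonneg fun i _ =>
    le_trans (norm_nonneg (g i x₀)) (hB i x₀ hx₀D)
  have hsum : ∀ (c : Fin l → ℝ), (∀ i, |c i| ≤ 1) → ∀ x ∈ D,
      ∑ i : Fin l, c i * g i x ≤ K := by
    intro c hc x hx
    refine Finset.sum_le_sum fun i _ => ?_
    calc c i * g i x ≤ |c i * g i x| := le_abs_self _
      _ = |c i| * |g i x| := abs_mul _ _
      _ ≤ 1 * B i := by
          have h1 := hB i x hx
          rw [Real.norm_eq_abs] at h1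
          exact mul_le_mul (hc i) h1 (abs_nonneg _) zero_le_one
      _ = B i := one_mul _
  set C := f x₀ - K - 1 with hCdef
  have hCle : C ≤ -1 := by
    have h0 := hx₀ 0 hD0
    rw [hf0] at h0
    simp only [hCdef]; linarith
  set S : Set (EuclideanSpace ℝ (Fin (l + 1))) :=
    {μ : EuclideanSpace ℝ (Fin (l + 1)) |
      ¬ ∃ x ∈ D,
        fderiv ℝ (fun y => f y - μ 0 - ∑ i : Fin l, μ i.succ * g i y) x = 0 ∧
        f x - μ 0 - ∑ i : Fin l, μ i.succ * g i x = 0} with hSdef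
  refine ⟨1, one_pos, fun lam lam' hl hl' hpos hpos' => ?_⟩
  set e0 : EuclideanSpace ℝ (Fin (l + 1)) := EuclideanSpace.single 0 1 with he0def
  have he00 : e0 0 = 1 := by simp [he0def, EuclideanSpace.single_apply]
  have he0s : ∀ i : Fin l, e0 i.succ = 0 := fun i => by
    simp [he0def, EuclideanSpace.single_apply, Fin.succ_ne_zero i]
  have happ : ∀ (t : ℝ) (a b : EuclideanSpace ℝ (Fin (l + 1))) (j : Fin (l + 1)),
      ((1 - t) • a + t • b) j = (1 - t) * a j + t * b j := fun t a b j => rfl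
  have haddapp : ∀ (a : EuclideanSpace ℝ (Fin (l + 1))) (c : ℝ) (j : Fin (l + 1)),
      (a + c • e0) j = a j + c * e0 j := fun a c j => rfl
  -- first/last leg: pushing the 0-th coordinate down to C keeps nondiscriminance
  have leg : ∀ ν : EuclideanSpace ℝ (Fin (l + 1)), ‖ν‖ < 1 →
      (∀ x ∈ D,
        fderiv ℝ (fun y => f y - ν 0 - ∑ i : Fin l, ν i.succ * g i y) x = 0 →
        0 < f x - ν 0 - ∑ i : Fin l, ν i.succ * g i x) →
      JoinedIn S ν (ν + (C - ν 0) • e0) := by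
    intro ν hν hp
    apply joinedIn_segment
    intro t ht
    set μ := (1 - t) • ν + t • (ν + (C - ν 0) • e0) with hμdef
    have hμ0 : μ 0 ≤ ν 0 := by
      have : μ 0 = (1 - t) * ν 0 + t * (ν 0 + (C - ν 0) * 1) := by
        rw [hμdef, happ, haddapp, he00]
      rw [this]
      have hν0 : -1 < ν 0 :=
        (abs_lt.mp (lt_of_le_of_lt (coord_abs_le_norm ν 0) hν)).1
      nlinarith [ht.1, ht.2]
    have hμs : ∀ i : Fin l, μ i.succ = ν i.succ := by
      intro i
      have : μ i.succ = (1 - t) * ν i.succ + t * (ν i.succ + (C - ν 0) * e0 i.succ) := by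
        rw [hμdef, happ, haddapp]
      rw [this, he0s]; ring
    rw [hSdef]
    rintro ⟨x, hx, hdz, hval⟩
    rw [tail_fderiv_eq f g μ ν hμs] at hdz
    have hνpos := hp x hx hdz
    have hseq : ∑ i : Fin l, μ i.succ * g i x = ∑ i : Fin l, ν i.succ * g i x :=
      Finset.sum_congr rfl fun i _ => by rw [hμs i]
    rw [hseq] at hval
    linarith
  -- middle leg: at level C everything is positive on D
  have mid : JoinedIn S (lam + (C - lam 0) • e0) (lam' + (C - lam' 0) • e0) := by
    apply joinedIn_segment
    intro t ht
    set μ := (1 - t) • (lam + (C - lam 0) • e0) + t • (lam' + (C - lam' 0) • e0) with hμdef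
    have hμ0 : μ 0 = C := by
      have : μ 0 = (1 - t) * (lam 0 + (C - lam 0) * 1) + t * (lam' 0 + (C - lam' 0) * 1) := by
        rw [hμdef, happ, haddapp, haddapp, he00]
      rw [this]; ring
    have hμs : ∀ i : Fin l, |μ i.succ| ≤ 1 := by
      intro i
      have hval : μ i.succ = (1 - t) * lam i.succ + t * lam' i.succ := by
        have : μ i.succ = (1 - t) * (lam i.succ + (C - lam 0) * e0 i.succ)
            + t * (lam' i.succ + (C - lam' 0) * e0 i.succ) := by
          rw [hμdef, happ, haddapp, haddapp]
        rw [this, he0s]; ring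
      have h1 : |lam i.succ| ≤ 1 := le_of_lt (lt_of_le_of_lt (coord_abs_le_norm lam i.succ) hl)
      have h2 : |lam' i.succ| ≤ 1 := le_of_lt (lt_of_le_of_lt (coord_abs_le_norm lam' i.succ) hl')
      rw [hval]
      calc |(1 - t) * lam i.succ + t * lam' i.succ|
          ≤ |(1 - t) * lam i.succ| + |t * lam' i.succ| := abs_add_le _ _
        _ = (1 - t) * |lam i.succ| + t * |lam' i.succ| := by
            rw [abs_mul, abs_mul, abs_of_nonneg (by linarith [ht.2] : (0:ℝ) ≤ 1 - t),
              abs_of_nonneg ht.1]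
        _ ≤ (1 - t) * 1 + t * 1 := by
            have := ht.1; have := ht.2
            gcongr <;> linarith
        _ = 1 := by ring
    rw [hSdef]
    rintro ⟨x, hx, hdz, hval⟩
    have hb := hsum (fun i => μ i.succ) hμs x hx
    have hfx := hx₀ x hx
    rw [hμ0] at hval
    rw [hCdef] at hval
    linarith
  exact ((leg lam hl hpos).trans mid).trans (leg lam' hl' hpos').symm
end

section
/- Let φ : ℝ² → ℝ be given by a homogeneous polynomial of degree 4 with φ(u) > 0 for every u ≠ (0,0). Then there exists τ₀ > 0 such that for every τ ∈ (0, τ₀) and every v = (v₁, v₂, v₃) ∈ ℝ³ with v₁² + v₂² + v₃² = 1, every complex root of the polynomial (φ(v₁, v₂) + v₃⁴)·X⁴ − (τ(v₁² + v₂²) + v₃²)·X² + τ³ ∈ ℂ[X] is real. -/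
/-!
On the unit sphere the leading coefficient `a = φ(v₁, v₂) + v₃⁴` is positive (`φ ≥ 0` by continuity,
and `φ > 0` off the origin) and bounded by some `M`, while the middle coefficient
`b = τ (v₁² + v₂²) + v₃²` is at least `τ` for `τ ≤ 1`. Hence `b² - 4 a τ³ ≥ τ² (1 - 4 M τ) ≥ 0` for
small `τ`, so the quadratic `a w² - b w + τ³` has two nonnegative real roots, and every `z` with
`z²` equal to one of them is real.
-/

open Filter Topology

lemma ContinuousAt.nonneg_of_pos_of_ne {X : Type*} [TopologicalSpace X] {f : X → ℝ} {x₀ : X}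
    [(𝓝[≠] x₀).NeBot] (hf : ContinuousAt f x₀) (h : ∀ x ≠ x₀, 0 < f x) : 0 ≤ f x₀ :=
  ge_of_tendsto (hf.tendsto.mono_left (nhdsWithin_le_nhds (s := {x₀}ᶜ)))
    (eventually_nhdsWithin_of_forall fun x hx => (h x hx).le)

lemma Complex.im_eq_zero_of_sq_eq_ofReal {z : ℂ} {r : ℝ} (hr : 0 ≤ r) (h : z ^ 2 = r) :
    z.im = 0 := by
  have hsq : z ^ 2 = ((√r : ℝ) : ℂ) ^ 2 := by rw [h, ← Complex.ofReal_pow, Real.sq_sqrt hr]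
  rcases sq_eq_sq_iff_eq_or_eq_neg.mp hsq with rfl | rfl <;> simp

lemma Complex.im_eq_zero_of_biquadratic {a b c : ℝ} (ha : 0 < a) (hb : 0 ≤ b) (hc : 0 ≤ c)
    (hdisc : 4 * a * c ≤ b ^ 2) {z : ℂ} (hz : a * z ^ 4 - b * z ^ 2 + c = 0) : z.im = 0 := by
  set s := √(b ^ 2 - 4 * a * c)
  have hsb : s ≤ b := Real.sqrt_le_iff.mpr ⟨hb, sub_le_self _ (by positivity)⟩
  have hdiscC : discrim (a : ℂ) (-b) c = (s : ℂ) * s := by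
    rw [discrim, ← Complex.ofReal_mul, Real.mul_self_sqrt (by linarith)]
    push_cast
    ring
  have hroot := (quadratic_eq_zero_iff (by exact_mod_cast ha.ne') hdiscC (z ^ 2)).mp
    (by linear_combination hz)
  rcases hroot with h | h
  · refine Complex.im_eq_zero_of_sq_eq_ofReal (r := (b + s) / (2 * a)) (by positivity) ?_
    rw [h]; push_cast; ring
  · refine Complex.im_eq_zero_of_sq_eq_ofReal (r := (b - s) / (2 * a))
      (div_nonneg (by linarith) (by positivity)) ?_
    rw [h]; push_cast; ring

section UnitSphere

variable {φ : ℝ → ℝ → ℝ} {v₁ v₂ v₃ : ℝ}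

lemma nonneg_of_pos_of_ne_zero (hφ : Continuous (Function.uncurry φ))
    (hpos : ∀ u₁ u₂ : ℝ, (u₁, u₂) ≠ (0, 0) → 0 < φ u₁ u₂) (u₁ u₂ : ℝ) : 0 ≤ φ u₁ u₂ := by
  by_cases hu : (u₁, u₂) = (0, 0)
  · obtain ⟨rfl, rfl⟩ := Prod.mk.inj hu
    exact (hφ.continuousAt (x := (0, 0))).nonneg_of_pos_of_ne fun ⟨w₁, w₂⟩ hw => hpos w₁ w₂ hw
  · exact (hpos u₁ u₂ hu).le

lemma leading_coeff_pos (hφ : ∀ u₁ u₂, 0 ≤ φ u₁ u₂)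
    (hpos : ∀ u₁ u₂ : ℝ, (u₁, u₂) ≠ (0, 0) → 0 < φ u₁ u₂) (hv : v₁ ^ 2 + v₂ ^ 2 + v₃ ^ 2 = 1) :
    0 < φ v₁ v₂ + v₃ ^ 4 := by
  by_cases h₃ : v₃ = 0
  · have h₁₂ : (v₁, v₂) ≠ (0, 0) := by
      rintro ⟨⟩
      simp [h₃] at hv
    linarith [hpos v₁ v₂ h₁₂, pow_nonneg (sq_nonneg v₃) 2]
  · linarith [hφ v₁ v₂, pow_pos (sq_pos_of_ne_zero h₃) 2]

lemma exists_leading_coeff_le (hφ : Continuous (Function.uncurry φ)) :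
    ∃ M > 0, ∀ v₁ v₂ v₃ : ℝ, v₁ ^ 2 + v₂ ^ 2 + v₃ ^ 2 = 1 → φ v₁ v₂ + v₃ ^ 4 ≤ M := by
  obtain ⟨C, hC⟩ := (isCompact_closedBall (0 : ℝ × ℝ) 1).exists_bound_of_continuousOn
    hφ.continuousOn
  refine ⟨max C 0 + 1, by positivity, fun v₁ v₂ v₃ hv => ?_⟩
  have hball : (v₁, v₂) ∈ Metric.closedBall (0 : ℝ × ℝ) 1 := by
    rw [mem_closedBall_zero_iff, Prod.norm_def, max_le_iff, Real.norm_eq_abs, Real.norm_eq_abs,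
      ← sq_le_one_iff_abs_le_one, ← sq_le_one_iff_abs_le_one]
    constructor <;> nlinarith [sq_nonneg v₁, sq_nonneg v₂, sq_nonneg v₃]
  have hφC : φ v₁ v₂ ≤ C := (le_abs_self _).trans (hC _ hball)
  have hv₃ : v₃ ^ 4 ≤ 1 := by nlinarith [sq_nonneg v₁, sq_nonneg v₂, sq_nonneg v₃]
  linarith [le_max_left C 0]

lemma biquadratic_discrim_nonneg {M τ : ℝ} (hτ : 0 < τ) (hτ₁ : τ ≤ 1) (hMτ : 4 * M * τ ≤ 1)
    (hM : φ v₁ v₂ + v₃ ^ 4 ≤ M) (hv : v₁ ^ 2 + v₂ ^ 2 + v₃ ^ 2 = 1) :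
    4 * (φ v₁ v₂ + v₃ ^ 4) * τ ^ 3 ≤ (τ * (v₁ ^ 2 + v₂ ^ 2) + v₃ ^ 2) ^ 2 := by
  have hb : τ ≤ τ * (v₁ ^ 2 + v₂ ^ 2) + v₃ ^ 2 := by nlinarith [sq_nonneg v₃]
  calc 4 * (φ v₁ v₂ + v₃ ^ 4) * τ ^ 3 ≤ (4 * M * τ) * τ ^ 2 := by nlinarith [pow_pos hτ 3]
    _ ≤ τ ^ 2 := by nlinarith [sq_nonneg τ]
    _ ≤ _ := pow_le_pow_left₀ hτ.le hb 2

end UnitSphere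

theorem stmt3_general (φ : ℝ → ℝ → ℝ)
    (P : MvPolynomial (Fin 2) ℝ)
    (hφP : ∀ u₁ u₂ : ℝ, φ u₁ u₂ = MvPolynomial.eval ![u₁, u₂] P)
    (hpos : ∀ u₁ u₂ : ℝ, (u₁, u₂) ≠ (0, 0) → 0 < φ u₁ u₂) :
    ∃ τ₀ > (0 : ℝ), ∀ τ ∈ Set.Ioo (0 : ℝ) τ₀, ∀ v₁ v₂ v₃ : ℝ,
      v₁ ^ 2 + v₂ ^ 2 + v₃ ^ 2 = 1 →
      ∀ z : ℂ,
        (Polynomial.C ((φ v₁ v₂ + v₃ ^ 4 : ℝ) : ℂ) * Polynomial.X ^ 4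
          - Polynomial.C ((τ * (v₁ ^ 2 + v₂ ^ 2) + v₃ ^ 2 : ℝ) : ℂ) * Polynomial.X ^ 2
          + Polynomial.C ((τ ^ 3 : ℝ) : ℂ)).IsRoot z →
        z.im = 0 := by
  have hcont : Continuous (Function.uncurry φ) := by
    have : Function.uncurry φ = fun p : ℝ × ℝ => MvPolynomial.eval ![p.1, p.2] P := by
      ext ⟨u₁, u₂⟩; exact hφP u₁ u₂
    rw [this]
    exact (MvPolynomial.continuous_eval P).comp (by fun_prop)
  obtain ⟨M, hM, hM_le⟩ := exists_leading_coeff_le hcont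
  refine ⟨min 1 (1 / (4 * M)), by positivity, ?_⟩
  rintro τ ⟨hτ, hτ_lt⟩ v₁ v₂ v₃ hv z hz
  have hτ₁ : τ ≤ 1 := (hτ_lt.trans_le (min_le_left _ _)).le
  have hMτ : 4 * M * τ ≤ 1 := by
    have := (hτ_lt.trans_le (min_le_right _ _)).le
    rwa [le_div_iff₀ (by positivity), mul_comm] at this
  have ha := leading_coeff_pos (nonneg_of_pos_of_ne_zero hcont hpos) hpos hv
  refine Complex.im_eq_zero_of_biquadratic ha (by positivity) (by positivity)
    (biquadratic_discrim_nonneg hτ hτ₁ hMτ (hM_le v₁ v₂ v₃ hv) hv) ?_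
  simpa [Polynomial.IsRoot] using hz

/-- for a positive-definite homogeneous quartic `φ` on `ℝ²`, there is `τ₀ > 0`
such that for all `τ ∈ (0, τ₀)` and all unit vectors `(v₁, v₂, v₃)`, every complex root of
`(φ(v₁,v₂) + v₃⁴)·X⁴ − (τ(v₁²+v₂²) + v₃²)·X² + τ³` is real. -/
theorem stmt3 (φ : ℝ → ℝ → ℝ)
    (P : MvPolynomial (Fin 2) ℝ) (hP : P.IsHomogeneous 4)
    (hφP : ∀ u₁ u₂ : ℝ, φ u₁ u₂ = MvPolynomial.eval ![u₁, u₂] P)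
    (hpos : ∀ u₁ u₂ : ℝ, (u₁, u₂) ≠ (0, 0) → 0 < φ u₁ u₂) :
    ∃ τ₀ > (0 : ℝ), ∀ τ ∈ Set.Ioo (0 : ℝ) τ₀, ∀ v₁ v₂ v₃ : ℝ,
      v₁ ^ 2 + v₂ ^ 2 + v₃ ^ 2 = 1 →
      ∀ z : ℂ,
        (Polynomial.C ((φ v₁ v₂ + v₃ ^ 4 : ℝ) : ℂ) * Polynomial.X ^ 4
          - Polynomial.C ((τ * (v₁ ^ 2 + v₂ ^ 2) + v₃ ^ 2 : ℝ) : ℂ) * Polynomial.X ^ 2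
          + Polynomial.C ((τ ^ 3 : ℝ) : ℂ)).IsRoot z →
        z.im = 0 :=
  stmt3_general φ P hφP hpos
end

section
/- Let φ : ℝ² → ℝ be given by a homogeneous polynomial of degree 4 with φ(u) > 0 for every u ≠ (0,0). For every ε > 0 there exists τ₀ > 0 such that for all τ ∈ (0, τ₀), writing D for the closed ball of radius ε about the origin of ℝ³: the set S₁ = {(x₁,x₂,x₃) ∈ D : φ(x₁,x₂) − x₃² + τ ≤ 0} has exactly two connected components, while the set S₂ = {(x₁,x₂,x₃) ∈ D : φ(x₁,x₂) − τ(x₁² + x₂²) − x₃² + τ³ ≤ 0} is connected and nonempty. -/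
/-!
Both sets have the form `{x ∈ D : F(x₁, x₂) ≤ x₃²}`, and for both choices of `F` the quantity
`F(t u, t v) + t² (u² + v²)` is nondecreasing in `t ∈ [0, 1]` (homogeneity of `φ`, `τ ≤ 1`).
This lets every point of the half `±x₃ ≥ 0` slide to the pole `(0, 0, ±ε)` along a path on
which `F(x₁, x₂) ≤ x₃²` is preserved, so each half is path connected. For `S₁` the function
`φ + τ` is positive, so `x₃` never vanishes and the two halves are the two components. For `S₂`
the point `(r, 0, 0)` with `r² = τ / (2 φ(1, 0))` belongs to both halves once `4 φ(1, 0) τ ≤ 1`.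
-/

open Metric Set

theorem MvPolynomial.IsHomogeneous.eval_smul {σ R : Type*} [Fintype σ] [CommSemiring R]
    {P : MvPolynomial σ R} {n : ℕ} (hP : P.IsHomogeneous n) (r : R) (x : σ → R) :
    eval (r • x) P = r ^ n * eval x P := by
  rw [eval_eq', eval_eq', Finset.mul_sum]
  refine Finset.sum_congr rfl fun d hd => ?_
  have hdeg : ∑ i, d i = n := by
    simpa [Finsupp.weight_apply, Finsupp.sum_fintype] using hP (mem_support_iff.mp hd)
  simp only [Pi.smul_apply, smul_eq_mul, mul_pow, Finset.prod_mul_distrib,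
    Finset.prod_pow_eq_pow_sum, hdeg]
  ring

theorem natCard_connectedComponents_eq_two_of_isClopen {Y : Type*} [TopologicalSpace Y]
    {U : Set Y} (hU : IsClopen U) (hUconn : IsPreconnected U) (hUcconn : IsPreconnected Uᶜ)
    {p q : Y} (hp : p ∈ U) (hq : q ∈ Uᶜ) :
    Nat.card (ConnectedComponents Y) = 2 := by
  have hcover : ∀ y : Y, connectedComponent y = connectedComponent p ∨
      connectedComponent y = connectedComponent q := by
    intro y
    by_cases hy : y ∈ U
    · exact Or.inl (connectedComponent_eq (hUconn.subset_connectedComponent hp hy)).symm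
    · exact Or.inr (connectedComponent_eq (hUcconn.subset_connectedComponent hq hy)).symm
  refine Nat.card_eq_two_iff.2 ⟨p, q, fun hpq => hq ?_, ?_⟩
  · rw [ConnectedComponents.coe_eq_coe] at hpq
    exact hU.connectedComponent_subset hp (hpq ▸ mem_connectedComponent)
  · refine eq_univ_of_forall (ConnectedComponents.surjective_coe.forall.2 fun y => ?_)
    simp only [mem_insert_iff, mem_singleton_iff, ConnectedComponents.coe_eq_coe]
    exact hcover y

theorem natCard_connectedComponents_eq_two_of_ne_zero {X : Type*} [TopologicalSpace X]
    {S : Set X} {g : X → ℝ} (hg : Continuous g) (hS : ∀ x ∈ S, g x ≠ 0)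
    (hpos : IsPreconnected (S ∩ {x | 0 ≤ g x})) (hneg : IsPreconnected (S ∩ {x | 0 ≤ -g x}))
    {p q : X} (hp : p ∈ S ∩ {x | 0 ≤ g x}) (hq : q ∈ S ∩ {x | 0 ≤ -g x}) :
    Nat.card (ConnectedComponents S) = 2 := by
  set U : Set S := (↑) ⁻¹' {x | 0 ≤ g x}
  have hgS : Continuous fun x : S => g x := hg.comp continuous_subtype_val
  have hopen : U = {x : S | 0 < g x} := ext fun x => (hS x x.2).symm.le_iff_lt
  have hcompl : Uᶜ = (↑) ⁻¹' {x | 0 ≤ -g x} := by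
    ext x
    simp only [U, mem_compl_iff, mem_preimage, mem_ofPred_eq, not_le, neg_nonneg]
    exact (hS x x.2).le_iff_lt.symm
  have hclopen : IsClopen U :=
    ⟨isClosed_le continuous_const hgS, hopen ▸ isOpen_lt continuous_const hgS⟩
  refine natCard_connectedComponents_eq_two_of_isClopen (p := ⟨p, hp.1⟩) (q := ⟨q, hq.1⟩)
    hclopen ?_ ?_ hp.2 ?_
  · rwa [← Topology.IsInducing.subtypeVal.isPreconnected_image, Subtype.image_preimage_coe]
  · rwa [hcompl, ← Topology.IsInducing.subtypeVal.isPreconnected_image,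
      Subtype.image_preimage_coe]
  · rw [hcompl]; exact hq.2

theorem EuclideanSpace.mem_closedBall_zero_iff_sum_sq {ι : Type*} [Fintype ι] {ε : ℝ}
    (hε : 0 ≤ ε) (x : EuclideanSpace ℝ ι) :
    x ∈ closedBall 0 ε ↔ ∑ i, x i ^ 2 ≤ ε ^ 2 := by
  rw [mem_closedBall_zero_iff, ← sq_le_sq₀ (norm_nonneg _) hε, EuclideanSpace.norm_sq_eq]
  simp only [Real.norm_eq_abs, sq_abs]

def region (F : ℝ → ℝ → ℝ) (ε : ℝ) : Set (EuclideanSpace ℝ (Fin 3)) :=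
  {x | x ∈ closedBall 0 ε ∧ F (x 0) (x 1) ≤ x 2 ^ 2}

section region

variable {F : ℝ → ℝ → ℝ} {ε σ : ℝ}

theorem mem_region_iff (hε : 0 ≤ ε) (x : EuclideanSpace ℝ (Fin 3)) :
    x ∈ region F ε ↔ x 0 ^ 2 + x 1 ^ 2 + x 2 ^ 2 ≤ ε ^ 2 ∧ F (x 0) (x 1) ≤ x 2 ^ 2 := by
  rw [region, mem_ofPred_eq, EuclideanSpace.mem_closedBall_zero_iff_sum_sq hε, Fin.sum_univ_three]

/-- The path is `t ↦ (t x₁, t x₂, σ c(t))` with `c(t)² = (1-t) ε² + t x₃² + t (1-t) (x₁² + x₂²)`: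
its squared norm `(1-t) ε² + t ‖x‖²` stays `≤ ε²`, and the hypothesis on `F` is exactly what keeps
`F(t x₁, t x₂) ≤ c(t)²`. -/
theorem joinedIn_region_pole
    (hF : ∀ u v t, t ∈ Icc (0 : ℝ) 1 → F (t * u) (t * v) ≤ F u v + (1 - t ^ 2) * (u ^ 2 + v ^ 2))
    (hε : 0 ≤ ε) (hσ : σ ^ 2 = 1) {x : EuclideanSpace ℝ (Fin 3)}
    (hx : x ∈ region F ε ∩ {x | 0 ≤ σ * x 2}) :
    JoinedIn (region F ε ∩ {x | 0 ≤ σ * x 2}) !₂[0, 0, σ * ε] x := by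
  obtain ⟨hxR, hxσ⟩ := hx
  obtain ⟨hball, hFx⟩ := (mem_region_iff hε x).1 hxR
  set ρ := x 0 ^ 2 + x 1 ^ 2
  have hρ : 0 ≤ ρ := by positivity
  let c : ℝ → ℝ := fun t => √((1 - t) * ε ^ 2 + t * x 2 ^ 2 + t * (1 - t) * ρ)
  refine JoinedIn.ofLine (f := fun t => !₂[t * x 0, t * x 1, σ * c t]) (by fun_prop) ?_ ?_ ?_
  · simp [c, Real.sqrt_sq hε]
  · have hsqrt : √(x 2 ^ 2) = σ * x 2 := by
      rw [← one_mul (x 2 ^ 2), ← hσ, ← mul_pow, Real.sqrt_sq hxσ]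
    have hc1 : σ * c 1 = x 2 := by
      rw [show c 1 = σ * x 2 by simp [c, hsqrt], ← mul_assoc, ← sq, hσ, one_mul]
    ext i
    fin_cases i <;> simp [hc1]
  · rintro _ ⟨t, ⟨ht0, ht1⟩, rfl⟩
    have hc : c t ^ 2 = (1 - t) * ε ^ 2 + t * x 2 ^ 2 + t * (1 - t) * ρ :=
      Real.sq_sqrt (by have := mul_nonneg ht0 (sub_nonneg.2 ht1); positivity)
    have hσc : (σ * c t) ^ 2 = c t ^ 2 := by rw [mul_pow, hσ, one_mul]
    refine ⟨(mem_region_iff hε _).2 ⟨?_, ?_⟩, ?_⟩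
    · simp only [Matrix.cons_val]
      nlinarith [mul_le_mul_of_nonneg_left hball ht0]
    · simp only [Matrix.cons_val]
      nlinarith [hF (x 0) (x 1) t ⟨ht0, ht1⟩, mul_le_mul_of_nonneg_left hball (sub_nonneg.2 ht1)]
    · show 0 ≤ σ * (σ * c t)
      rw [← mul_assoc, ← sq, hσ, one_mul]
      exact Real.sqrt_nonneg _

theorem isPathConnected_region_inter
    (hF : ∀ u v t, t ∈ Icc (0 : ℝ) 1 → F (t * u) (t * v) ≤ F u v + (1 - t ^ 2) * (u ^ 2 + v ^ 2))
    (hε : 0 ≤ ε) (hσ : σ ^ 2 = 1) (hne : (region F ε ∩ {x | 0 ≤ σ * x 2}).Nonempty) :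
    IsPathConnected (region F ε ∩ {x | 0 ≤ σ * x 2}) :=
  let ⟨_, hx⟩ := hne
  ⟨_, (joinedIn_region_pole hF hε hσ hx).source_mem, fun _ hy => joinedIn_region_pole hF hε hσ hy⟩

theorem pole_mem_region (hF : F 0 0 ≤ ε ^ 2) (hε : 0 ≤ ε) (hσ : σ ^ 2 = 1) :
    !₂[0, 0, σ * ε] ∈ region F ε ∩ {x | 0 ≤ σ * x 2} := by
  have hσε : (σ * ε) ^ 2 = ε ^ 2 := by rw [mul_pow, hσ, one_mul]
  refine ⟨(mem_region_iff hε _).2 ⟨?_, ?_⟩, ?_⟩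
  · simp [hσε]
  · simpa [hσε] using hF
  · show 0 ≤ σ * (σ * ε)
    rw [← mul_assoc, ← sq, hσ, one_mul]
    exact hε

end region

section quartic

variable {φ : ℝ → ℝ → ℝ} {ε τ : ℝ}

theorem homogeneous_apply_mul_le (hφ : ∀ t u v, φ (t * u) (t * v) = t ^ 4 * φ u v)
    (hφ0 : ∀ u v, 0 ≤ φ u v) (u v : ℝ) {t : ℝ} (ht : t ∈ Icc (0 : ℝ) 1) :
    φ (t * u) (t * v) ≤ φ u v := by
  rw [hφ]
  exact mul_le_of_le_one_left (hφ0 u v) (pow_le_one₀ ht.1 ht.2)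

theorem natCard_connectedComponents_quartic_add_le_sq
    (hφ : ∀ t u v, φ (t * u) (t * v) = t ^ 4 * φ u v) (hφ0 : ∀ u v, 0 ≤ φ u v)
    (hε : 0 ≤ ε) (hτ : 0 < τ) (hτε : τ ≤ ε ^ 2) :
    Nat.card (ConnectedComponents {x : EuclideanSpace ℝ (Fin 3) //
      x ∈ closedBall 0 ε ∧ φ (x 0) (x 1) - x 2 ^ 2 + τ ≤ 0}) = 2 := by
  set F : ℝ → ℝ → ℝ := fun u v => φ u v + τ
  have hS : {x : EuclideanSpace ℝ (Fin 3) | x ∈ closedBall 0 ε ∧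
      φ (x 0) (x 1) - x 2 ^ 2 + τ ≤ 0} = region F ε :=
    ext fun x => and_congr_right fun _ => by simp only [F]; constructor <;> intro h <;> linarith
  have hF : ∀ u v t, t ∈ Icc (0 : ℝ) 1 →
      F (t * u) (t * v) ≤ F u v + (1 - t ^ 2) * (u ^ 2 + v ^ 2) := fun u v t ht => by
    have : 0 ≤ (1 - t ^ 2) * (u ^ 2 + v ^ 2) :=
      mul_nonneg (sub_nonneg.2 (pow_le_one₀ ht.1 ht.2)) (by positivity)
    simp only [F]
    linarith [homogeneous_apply_mul_le hφ hφ0 u v ht]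
  have hF0 : F 0 0 ≤ ε ^ 2 := by
    have hφ00 : φ 0 0 = 0 := by simpa using hφ 0 0 0
    simpa [F, hφ00] using hτε
  have hS0 : ∀ x ∈ region F ε, x 2 ≠ 0 := fun x hx h0 => by
    have hFx := hx.2
    simp only [F, h0] at hFx
    linarith [hφ0 (x 0) (x 1)]
  change Nat.card (ConnectedComponents {x : EuclideanSpace ℝ (Fin 3) | x ∈ closedBall 0 ε ∧
      φ (x 0) (x 1) - x 2 ^ 2 + τ ≤ 0}) = 2
  rw [hS]
  have hpole (σ : ℝ) (hσ : σ ^ 2 = 1) := pole_mem_region hF0 hε hσ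
  have hconn (σ : ℝ) (hσ : σ ^ 2 = 1) :=
    (isPathConnected_region_inter hF hε hσ ⟨_, hpole σ hσ⟩).isConnected.isPreconnected
  have hpos := hconn 1 (one_pow 2)
  have hneg := hconn (-1) (by norm_num)
  simp only [one_mul, neg_one_mul] at hpos hneg
  refine natCard_connectedComponents_eq_two_of_ne_zero (g := fun x => x 2) (by fun_prop) hS0
    hpos hneg (p := !₂[0, 0, ε]) (q := !₂[0, 0, -ε]) ?_ ?_
  · simpa using hpole 1 (one_pow 2)
  · simpa using hpole (-1) (by norm_num)

theorem isConnected_quartic_sub_le_sq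
    (hφ : ∀ t u v, φ (t * u) (t * v) = t ^ 4 * φ u v) (hφ0 : ∀ u v, 0 ≤ φ u v)
    (ha : 0 < φ 1 0) (hε : 0 ≤ ε) (hτ : 0 ≤ τ) (hτ1 : τ ≤ 1) (hτa : 4 * φ 1 0 * τ ≤ 1)
    (hτε : τ ≤ 2 * φ 1 0 * ε ^ 2) :
    IsConnected {x : EuclideanSpace ℝ (Fin 3) | x ∈ closedBall 0 ε ∧
      φ (x 0) (x 1) - τ * (x 0 ^ 2 + x 1 ^ 2) - x 2 ^ 2 + τ ^ 3 ≤ 0} := by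
  set F : ℝ → ℝ → ℝ := fun u v => φ u v - τ * (u ^ 2 + v ^ 2) + τ ^ 3
  have hS : {x : EuclideanSpace ℝ (Fin 3) | x ∈ closedBall 0 ε ∧
      φ (x 0) (x 1) - τ * (x 0 ^ 2 + x 1 ^ 2) - x 2 ^ 2 + τ ^ 3 ≤ 0} =
      region F ε ∩ {x | 0 ≤ 1 * x 2} ∪ region F ε ∩ {x | 0 ≤ -1 * x 2} := by
    rw [← inter_union_distrib_left]
    ext x
    simp only [region, mem_inter_iff, mem_union, mem_ofPred_eq, F]
    constructor
    · rintro ⟨hx, h⟩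
      refine ⟨⟨hx, by linarith⟩, ?_⟩
      rcases le_total 0 (x 2) with h2 | h2 <;> [left; right] <;> linarith
    · rintro ⟨⟨hx, h⟩, -⟩
      exact ⟨hx, by linarith⟩
  have hF : ∀ u v t, t ∈ Icc (0 : ℝ) 1 →
      F (t * u) (t * v) ≤ F u v + (1 - t ^ 2) * (u ^ 2 + v ^ 2) := fun u v t ht => by
    have : 0 ≤ (1 - τ) * (1 - t ^ 2) * (u ^ 2 + v ^ 2) :=
      mul_nonneg (mul_nonneg (sub_nonneg.2 hτ1) (sub_nonneg.2 (pow_le_one₀ ht.1 ht.2)))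
        (by positivity)
    simp only [F]
    nlinarith [homogeneous_apply_mul_le hφ hφ0 u v ht]
  set r := √(τ / (2 * φ 1 0))
  have hr : 2 * φ 1 0 * r ^ 2 = τ := by
    rw [Real.sq_sqrt (by positivity)]
    field_simp
  have hφr : φ r 0 = r ^ 4 * φ 1 0 := by simpa using hφ r 1 0
  have hsaddle (σ : ℝ) : !₂[r, 0, 0] ∈ region F ε ∩ {x | 0 ≤ σ * x 2} := by
    refine ⟨(mem_region_iff hε _).2 ⟨?_, ?_⟩, ?_⟩
    · simp only [Matrix.cons_val]
      nlinarith
    · have hval : F r 0 = -(φ 1 0 * r ^ 4 * (1 - 4 * φ 1 0 * τ)) := by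
        simp only [F, hφr, ← hr]
        ring
      simp only [Matrix.cons_val, hval]
      have : 0 ≤ φ 1 0 * r ^ 4 * (1 - 4 * φ 1 0 * τ) := by
        have := sub_nonneg.2 hτa
        positivity
      nlinarith
    · simp
  rw [hS]
  exact ((isPathConnected_region_inter hF hε (one_pow 2) ⟨_, hsaddle 1⟩).union
    (isPathConnected_region_inter hF hε (by norm_num) ⟨_, hsaddle (-1)⟩)
    ⟨_, hsaddle 1, hsaddle (-1)⟩).isConnected

end quartic

/-- for a positive-definite homogeneous quartic `φ` on `ℝ²` and any `ε > 0`,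
for all small enough `τ > 0`, the set `S₁ = {x ∈ D : φ(x₁,x₂) − x₃² + τ ≤ 0}` has exactly
two connected components, while `S₂ = {x ∈ D : φ(x₁,x₂) − τ(x₁²+x₂²) − x₃² + τ³ ≤ 0}`
is connected and nonempty. -/
theorem stmt5 (φ : ℝ → ℝ → ℝ)
    (P : MvPolynomial (Fin 2) ℝ) (hP : P.IsHomogeneous 4)
    (hφP : ∀ u₁ u₂ : ℝ, φ u₁ u₂ = MvPolynomial.eval ![u₁, u₂] P)
    (hpos : ∀ u₁ u₂ : ℝ, (u₁, u₂) ≠ (0, 0) → 0 < φ u₁ u₂)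
    (ε : ℝ) (hε : 0 < ε) :
    ∃ τ₀ > (0 : ℝ), ∀ τ ∈ Set.Ioo (0 : ℝ) τ₀,
      Nat.card (ConnectedComponents
        {x : EuclideanSpace ℝ (Fin 3) //
          x ∈ Metric.closedBall (0 : EuclideanSpace ℝ (Fin 3)) ε ∧
          φ (x 0) (x 1) - (x 2) ^ 2 + τ ≤ 0}) = 2 ∧
      IsConnected {x : EuclideanSpace ℝ (Fin 3) |
          x ∈ Metric.closedBall (0 : EuclideanSpace ℝ (Fin 3)) ε ∧
          φ (x 0) (x 1) - τ * ((x 0) ^ 2 + (x 1) ^ 2) - (x 2) ^ 2 + τ ^ 3 ≤ 0} := by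
  have hφ : ∀ t u v, φ (t * u) (t * v) = t ^ 4 * φ u v := fun t u v => by
    rw [hφP, hφP, ← hP.eval_smul]
    simp [Matrix.smul_cons]
  have hφ0 : ∀ u v, 0 ≤ φ u v := fun u v => by
    by_cases h : (u, v) = (0, 0)
    · obtain ⟨rfl, rfl⟩ := Prod.ext_iff.1 h
      simpa using (hφ 0 0 0).ge
    · exact (hpos u v h).le
  have ha : 0 < φ 1 0 := hpos 1 0 (by simp)
  refine ⟨min (min (ε ^ 2) 1) (min (1 / (4 * φ 1 0)) (2 * φ 1 0 * ε ^ 2)), by positivity,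
    fun τ ⟨hτ0, hτ⟩ => ?_⟩
  simp only [lt_min_iff] at hτ
  obtain ⟨⟨hτε, hτ1⟩, hτa, hτε'⟩ := hτ
  rw [lt_div_iff₀ (by positivity)] at hτa
  exact ⟨natCard_connectedComponents_quartic_add_le_sq hφ hφ0 hε.le hτ0 hτε.le,
    isConnected_quartic_sub_le_sq hφ hφ0 ha hε.le hτ0.le hτ1.le (by linarith) hτε'.le⟩
end

section
/- Let M₀ be the symmetric 8×8 integer matrix with rows (−2,0,0,1,0,1,0,1), (0,−2,0,0,1,1,0,1), (0,0,−2,0,0,1,1,1), (1,0,0,−2,0,0,0,0), (0,1,0,0,−2,0,0,0), (1,1,1,0,0,−2,0,−2), (0,0,1,0,0,0,−2,0), (1,1,1,0,0,−2,0,−2). Then the kernel of the ℤ-linear map ℤ⁸ → ℤ⁸ defined by M₀ is a free abelian group of rank 2, and the cokernel ℤ⁸ / (image of M₀) is isomorphic to ℤ ⊕ ℤ ⊕ ℤ/3ℤ. -/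
/-- The intersection matrix of a distinguished basis of vanishing cycles of a
morsification of the parabolic singularity `P₈²`. -/
def P82IntersectionMatrix : Matrix (Fin 8) (Fin 8) ℤ :=
  !![-2, 0, 0, 1, 0, 1, 0, 1;
     0, -2, 0, 0, 1, 1, 0, 1;
     0, 0, -2, 0, 0, 1, 1, 1;
     1, 0, 0, -2, 0, 0, 0, 0;
     0, 1, 0, 0, -2, 0, 0, 0;
     1, 1, 1, 0, 0, -2, 0, -2;
     0, 0, 1, 0, 0, 0, -2, 0;
     1, 1, 1, 0, 0, -2, 0, -2]

namespace P82Aux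

open Matrix LinearMap

lemma cons_val_five {α : Type*} {m : ℕ} (x : α) (u : Fin (m + 5) → α) :
    Matrix.vecCons x u 5 = vecHead (vecTail (vecTail (vecTail (vecTail u)))) := rfl

lemma cons_val_six {α : Type*} {m : ℕ} (x : α) (u : Fin (m + 6) → α) :
    Matrix.vecCons x u 6 = vecHead (vecTail (vecTail (vecTail (vecTail (vecTail u))))) := rfl

lemma cons_val_seven {α : Type*} {m : ℕ} (x : α) (u : Fin (m + 7) → α) :
    Matrix.vecCons x u 7 =
      vecHead (vecTail (vecTail (vecTail (vecTail (vecTail (vecTail u)))))) := rfl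

def P : Matrix (Fin 8) (Fin 8) ℤ :=
  !![1, 0, 0, 0, 0, 0, 0, 0;
     0, 1, 0, 0, 0, 0, 0, 0;
     0, 0, 1, 0, 0, 0, 0, 0;
     0, 0, 2, 0, 0, 1, 0, 0;
     0, 0, 0, 0, 0, 0, 1, 0;
     2, 0, 4, 1, 0, 3, 5, 0;
     2, 2, 2, 1, 1, 3, 1, 0;
     0, 0, 0, 0, 0, -1, 0, 1]

def Pi : Matrix (Fin 8) (Fin 8) ℤ :=
  !![1, 0, 0, 0, 0, 0, 0, 0;
     0, 1, 0, 0, 0, 0, 0, 0;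
     0, 0, 1, 0, 0, 0, 0, 0;
     -2, 0, 2, -3, -5, 1, 0, 0;
     0, -2, 2, 0, 4, -1, 1, 0;
     0, 0, -2, 1, 0, 0, 0, 0;
     0, 0, 0, 0, 1, 0, 0, 0;
     0, 0, -2, 1, 0, 0, 0, 1]

def Q : Matrix (Fin 8) (Fin 8) ℤ :=
  !![0, 0, 0, 1, 3, -1, 2, 0;
     0, 0, 0, 0, 0, 1, 2, 0;
     0, 0, 0, 0, 1, 0, 2, 0;
     1, 0, -1, 2, 4, -2, 1, 0;
     0, 1, -1, 0, -2, 2, 1, 0;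
     0, 0, 1, 0, 2, 0, 3, -1;
     0, 0, 0, 0, 0, 0, 1, 0;
     0, 0, 0, 0, 0, 0, 0, 1]

def Qi : Matrix (Fin 8) (Fin 8) ℤ :=
  !![-2, 0, 0, 1, 0, 1, 0, 1;
     0, -2, 0, 0, 1, 1, 0, 1;
     0, 0, -2, 0, 0, 1, 1, 1;
     1, 1, -3, 0, 0, 0, 2, 0;
     0, 0, 1, 0, 0, 0, -2, 0;
     0, 1, 0, 0, 0, 0, -2, 0;
     0, 0, 0, 0, 0, 0, 1, 0;
     0, 0, 0, 0, 0, 0, 0, 1]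

def D : Matrix (Fin 8) (Fin 8) ℤ := Matrix.diagonal ![1, 1, 1, 1, 1, 3, 0, 0]

lemma hPPi : P * Pi = 1 := by decide
lemma hPiP : Pi * P = 1 := by decide
lemma hQQi : Q * Qi = 1 := by decide
lemma hQiQ : Qi * Q = 1 := by decide
lemma hMQ : P82IntersectionMatrix * Q = Pi * D := by decide
lemma hPM : P * P82IntersectionMatrix = D * Qi := by decide

def K : Matrix (Fin 8) (Fin 2) ℤ :=
  !![0, 0; 0, 0; 0, 0; 0, 0; 0, 0; 0, 0; 1, 0; 0, 1]

def L : Matrix (Fin 2) (Fin 8) ℤ :=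
  !![0, 0, 0, 0, 0, 0, 1, 0; 0, 0, 0, 0, 0, 0, 0, 1]

lemma hDK : D * K = 0 := by decide
lemma hLK : L * K = 1 := by decide

/-- Components of a kernel element of `D`. -/
lemma kerD_comp {v : Fin 8 → ℤ} (hv : v ∈ ker D.mulVecLin) :
    v 0 = 0 ∧ v 1 = 0 ∧ v 2 = 0 ∧ v 3 = 0 ∧ v 4 = 0 ∧ v 5 = 0 := by
  rw [mem_ker] at hv
  have h : ∀ i, (![1, 1, 1, 1, 1, 3, 0, 0] : Fin 8 → ℤ) i * v i = 0 := by
    intro i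
    have := congrFun hv i
    rwa [Matrix.mulVecLin_apply, D, Matrix.mulVec_diagonal] at this
  refine ⟨by simpa using h 0, by simpa using h 1, by simpa using h 2,
    by simpa using h 3, by simpa using h 4, ?_⟩
  have h5 := h 5
  rw [cons_val_five] at h5
  simp only [Matrix.tail_cons, Matrix.head_cons] at h5
  omega

/-- `ℤ² ≃ ker D`. -/
def e2 : (Fin 2 → ℤ) ≃ₗ[ℤ] ker D.mulVecLin :=
  LinearEquiv.ofLinear
    (codRestrict _ K.mulVecLin (fun x => by
      rw [mem_ker, Matrix.mulVecLin_apply, Matrix.mulVecLin_apply, Matrix.mulVec_mulVec, hDK,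
        Matrix.zero_mulVec]))
    (L.mulVecLin ∘ₗ (ker D.mulVecLin).subtype)
    (by
      refine LinearMap.ext fun w => Subtype.ext ?_
      obtain ⟨v, hv⟩ := w
      obtain ⟨h0, h1, h2, h3, h4, h5⟩ := kerD_comp hv
      have hL : L.mulVec v = ![v 6, v 7] := by
        funext i
        fin_cases i <;>
          simp [L, Matrix.mulVec, dotProduct, Fin.sum_univ_eight,
            cons_val_five, cons_val_six, cons_val_seven]
      have hK : ∀ a b : ℤ, K.mulVec ![a, b] = ![0, 0, 0, 0, 0, 0, a, b] := by
        intro a b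
        funext i
        fin_cases i <;>
          simp [K, Matrix.mulVec, dotProduct, Fin.sum_univ_two,
            cons_val_five, cons_val_six, cons_val_seven]
      simp only [coe_comp, Function.comp_apply, codRestrict_apply, Submodule.coe_subtype,
        Matrix.mulVecLin_apply, id_coe, id_eq]
      rw [hL, hK]
      funext i
      fin_cases i <;>
        simp [cons_val_five, cons_val_six, cons_val_seven, h0, h1, h2, h3, h4, h5]
    )
    (by
      ext x i
      simp only [coe_comp, Function.comp_apply, codRestrict_apply, Matrix.mulVecLin_apply,
        Submodule.coe_subtype, id_coe, id_eq]
      rw [Matrix.mulVec_mulVec, hLK, Matrix.one_mulVec])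

/-- `ker D ≃ ker M`. -/
def e3 : (ker D.mulVecLin) ≃ₗ[ℤ] ker P82IntersectionMatrix.mulVecLin :=
  LinearEquiv.ofLinear
    (Q.mulVecLin.restrict (p := ker D.mulVecLin) (q := ker P82IntersectionMatrix.mulVecLin)
      (fun v hv => by
        rw [mem_ker] at hv ⊢
        rw [Matrix.mulVecLin_apply, Matrix.mulVecLin_apply, Matrix.mulVec_mulVec, hMQ,
          ← Matrix.mulVec_mulVec, ← Matrix.mulVecLin_apply D, hv, Matrix.mulVec_zero]))
    (Qi.mulVecLin.restrict (p := ker P82IntersectionMatrix.mulVecLin) (q := ker D.mulVecLin)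
      (fun v hv => by
        rw [mem_ker] at hv ⊢
        rw [Matrix.mulVecLin_apply, Matrix.mulVecLin_apply, Matrix.mulVec_mulVec, ← hPM,
          ← Matrix.mulVec_mulVec, ← Matrix.mulVecLin_apply P82IntersectionMatrix, hv,
          Matrix.mulVec_zero]))
    (by
      ext ⟨v, hv⟩
      simp only [coe_comp, Function.comp_apply, restrict_coe_apply, Matrix.mulVecLin_apply,
        id_coe, id_eq]
      rw [Matrix.mulVec_mulVec, hQQi, Matrix.one_mulVec])
    (by
      ext ⟨v, hv⟩
      simp only [coe_comp, Function.comp_apply, restrict_coe_apply, Matrix.mulVecLin_apply,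
        id_coe, id_eq]
      rw [Matrix.mulVec_mulVec, hQiQ, Matrix.one_mulVec])

def eKer : (Fin 2 → ℤ) ≃ₗ[ℤ] ker P82IntersectionMatrix.mulVecLin := e2.trans e3

/-- The map onto the cokernel model. -/
def φ : (Fin 8 → ℤ) →ₗ[ℤ] ℤ × ℤ × ZMod 3 :=
  LinearMap.prod (LinearMap.proj 6)
    (LinearMap.prod (LinearMap.proj 7)
      ((Int.castRingHom (ZMod 3)).toAddMonoidHom.toIntLinearMap ∘ₗ LinearMap.proj 5))

lemma φ_apply (v : Fin 8 → ℤ) : φ v = (v 6, v 7, ((v 5 : ℤ) : ZMod 3)) := rfl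

lemma φ_surj : Function.Surjective φ := by
  rintro ⟨a, b, c⟩
  refine ⟨![0, 0, 0, 0, 0, (c.val : ℤ), a, b], ?_⟩
  rw [φ_apply]
  refine Prod.ext ?_ (Prod.ext ?_ ?_) <;>
    simp [cons_val_five, cons_val_six, cons_val_seven, ZMod.natCast_val, ZMod.cast_id]

lemma range_eq_ker : range D.mulVecLin = ker φ := by
  apply le_antisymm
  · rintro _ ⟨u, rfl⟩
    rw [mem_ker, Matrix.mulVecLin_apply, φ_apply]
    have h : ∀ i, (D.mulVec u) i = (![1, 1, 1, 1, 1, 3, 0, 0] : Fin 8 → ℤ) i * u i :=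
      fun i => Matrix.mulVec_diagonal _ _ _
    rw [h 6, h 7, h 5, cons_val_five, cons_val_six, cons_val_seven]
    rw [Prod.mk_eq_zero, Prod.mk_eq_zero]
    refine ⟨by simp [cons_val_six], by simp [cons_val_seven], ?_⟩
    simp only [Matrix.tail_cons, Matrix.head_cons]
    push_cast
    simp only [mul_eq_zero]
    exact Or.inl (by decide)
  · intro v hv
    rw [mem_ker, φ_apply, Prod.mk_eq_zero, Prod.mk_eq_zero] at hv
    obtain ⟨h6, h7, h5⟩ := hv
    have hdvd : (3 : ℤ) ∣ v 5 := by
      have := (ZMod.intCast_zmod_eq_zero_iff_dvd (v 5) 3).mp h5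
      exact_mod_cast this
    refine ⟨fun i => if i = 5 then v 5 / 3 else v i, ?_⟩
    rw [Matrix.mulVecLin_apply]
    funext i
    have h : ∀ w, (D.mulVec w) i = (![1, 1, 1, 1, 1, 3, 0, 0] : Fin 8 → ℤ) i * w i :=
      fun w => Matrix.mulVec_diagonal _ _ _
    rw [h]
    fin_cases i <;>
      simp_all [cons_val_five, cons_val_six, cons_val_seven]
    exact Int.mul_ediv_cancel' hdvd

def eP : (Fin 8 → ℤ) ≃ₗ[ℤ] (Fin 8 → ℤ) :=
  LinearEquiv.ofLinear P.mulVecLin Pi.mulVecLin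
    (by rw [← Matrix.mulVecLin_mul, hPPi, Matrix.mulVecLin_one])
    (by rw [← Matrix.mulVecLin_mul, hPiP, Matrix.mulVecLin_one])

def eQi : (Fin 8 → ℤ) ≃ₗ[ℤ] (Fin 8 → ℤ) :=
  LinearEquiv.ofLinear Qi.mulVecLin Q.mulVecLin
    (by rw [← Matrix.mulVecLin_mul, hQiQ, Matrix.mulVecLin_one])
    (by rw [← Matrix.mulVecLin_mul, hQQi, Matrix.mulVecLin_one])

lemma map_range : Submodule.map (eP : (Fin 8 → ℤ) →ₗ[ℤ] (Fin 8 → ℤ))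
    (range P82IntersectionMatrix.mulVecLin) = range D.mulVecLin := by
  have h1 : Submodule.map (eP : (Fin 8 → ℤ) →ₗ[ℤ] (Fin 8 → ℤ))
      (range P82IntersectionMatrix.mulVecLin)
      = range ((P.mulVecLin) ∘ₗ P82IntersectionMatrix.mulVecLin) := by
    rw [range_comp]; rfl
  rw [h1, ← Matrix.mulVecLin_mul, hPM, Matrix.mulVecLin_mul]
  exact range_comp_of_range_eq_top _ (eQi.range)

noncomputable def eCok : ((Fin 8 → ℤ) ⧸ range P82IntersectionMatrix.mulVecLin)
    ≃ₗ[ℤ] (ℤ × ℤ × ZMod 3) :=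
  (Submodule.Quotient.equiv _ _ eP map_range).trans
    ((Submodule.quotEquivOfEq _ _ range_eq_ker).trans (φ.quotKerEquivOfSurjective φ_surj))

end P82Aux

/-- the kernel of the `ℤ`-linear map `ℤ⁸ → ℤ⁸` given by the matrix `M₀`
is free abelian of rank 2, and its cokernel is isomorphic to `ℤ ⊕ ℤ ⊕ ℤ/3ℤ`. -/
theorem stmt7 :
    Module.Free ℤ (LinearMap.ker P82IntersectionMatrix.mulVecLin) ∧
    Module.finrank ℤ (LinearMap.ker P82IntersectionMatrix.mulVecLin) = 2 ∧
    Nonempty (((Fin 8 → ℤ) ⧸ LinearMap.range P82IntersectionMatrix.mulVecLin)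
      ≃+ (ℤ × ℤ × ZMod 3)) := by
  refine ⟨Module.Free.of_equiv P82Aux.eKer, ?_, ⟨P82Aux.eCok.toAddEquiv⟩⟩
  rw [← LinearEquiv.finrank_eq P82Aux.eKer]
  simp
end

section
/- Let M₀ be the symmetric 8×8 integer matrix with rows (−2,0,0,1,0,1,0,1), (0,−2,0,0,1,1,0,1), (0,0,−2,0,0,1,1,1), (1,0,0,−2,0,0,0,0), (0,1,0,0,−2,0,0,0), (1,1,1,0,0,−2,0,−2), (0,0,1,0,0,0,−2,0), (1,1,1,0,0,−2,0,−2). Then, regarded as a real matrix, −M₀ is positive semidefinite (equivalently, vᵀ M₀ v ≤ 0 for all v ∈ ℝ⁸) and M₀ has rank 6. -/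
/-!
Writing `s = x₅ + x₇`, the quadratic form of `M₀` only sees `x₅` and `x₇` through `s`, and
completing squares along the three arms of the `E₆` diagram gives
`-2 xᵀ M₀ x = (2x₃ - x₀)² + (2x₄ - x₁)² + (2x₆ - x₂)² + (2s - x₀ - x₁ - x₂)² + Σ_{i<j≤2} (xᵢ - xⱼ)²`,
so `-M₀` is positive semidefinite. Its rank is at least 6 because the upper-left `E₆` block has
determinant 3, and at most 6 because `M₀` kills two independent vectors: `e₅ - e₇` and the
null vector `(2,2,2,1,1,3,1,0)` of the affine `E₆` form.
-/

open Matrix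

/-- The intersection matrix of a distinguished basis of vanishing cycles of a
morsification of the parabolic singularity `P₈²`, as a real matrix. -/
def P82IntersectionMatrixR : Matrix (Fin 8) (Fin 8) ℝ :=
  !![-2, 0, 0, 1, 0, 1, 0, 1;
     0, -2, 0, 0, 1, 1, 0, 1;
     0, 0, -2, 0, 0, 1, 1, 1;
     1, 0, 0, -2, 0, 0, 0, 0;
     0, 1, 0, 0, -2, 0, 0, 0;
     1, 1, 1, 0, 0, -2, 0, -2;
     0, 0, 1, 0, 0, 0, -2, 0;
     1, 1, 1, 0, 0, -2, 0, -2]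

theorem Matrix.le_rank_of_det_submatrix_ne_zero {m n K : Type*} [Fintype n] [Field K] {k : ℕ}
    (A : Matrix m n K) (r : Fin k → m) (c : Fin k → n) (h : (A.submatrix r c).det ≠ 0) :
    k ≤ A.rank := by
  simpa [rank_of_det_ne_zero h] using rank_submatrix_le A r c

def e6IntersectionMatrix : Matrix (Fin 6) (Fin 6) ℝ :=
  !![-2, 0, 0, 1, 0, 1;
     0, -2, 0, 0, 1, 1;
     0, 0, -2, 0, 0, 1;
     1, 0, 0, -2, 0, 0;
     0, 1, 0, 0, -2, 0;
     1, 1, 1, 0, 0, -2]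

theorem det_e6IntersectionMatrix : e6IntersectionMatrix.det = 3 := by
  simp [e6IntersectionMatrix, det_succ_row_zero, Fin.sum_univ_succ, Fin.succAbove]
  norm_num

namespace P82IntersectionMatrixR

theorem dotProduct_mulVec_self (x : Fin 8 → ℝ) :
    x ⬝ᵥ P82IntersectionMatrixR *ᵥ x =
      -(1 / 2) * ((2 * x 3 - x 0) ^ 2 + (2 * x 4 - x 1) ^ 2 + (2 * x 6 - x 2) ^ 2 +
        (2 * (x 5 + x 7) - (x 0 + x 1 + x 2)) ^ 2 +
        (x 0 - x 1) ^ 2 + (x 1 - x 2) ^ 2 + (x 0 - x 2) ^ 2) := by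
  simp only [dotProduct, mulVec, P82IntersectionMatrixR, of_apply, cons_val', cons_val_fin_one,
    Fin.sum_univ_succ, cons_val_zero, cons_val_succ, Fin.succ_zero_eq_one, Fin.succ_one_eq_two,
    Fin.reduceSucc, Finset.univ_unique, Fin.default_eq_zero, Finset.sum_singleton]
  ring

theorem dotProduct_mulVec_self_nonpos (x : Fin 8 → ℝ) :
    x ⬝ᵥ P82IntersectionMatrixR *ᵥ x ≤ 0 := by
  rw [dotProduct_mulVec_self]
  nlinarith [sq_nonneg (2 * x 3 - x 0), sq_nonneg (2 * x 4 - x 1), sq_nonneg (2 * x 6 - x 2),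
    sq_nonneg (2 * (x 5 + x 7) - (x 0 + x 1 + x 2)),
    sq_nonneg (x 0 - x 1), sq_nonneg (x 1 - x 2), sq_nonneg (x 0 - x 2)]

theorem isHermitian : P82IntersectionMatrixR.IsHermitian := by
  ext i j
  fin_cases i <;> fin_cases j <;> rfl

theorem neg_posSemidef : (-P82IntersectionMatrixR).PosSemidef := by
  refine .of_dotProduct_mulVec_nonneg isHermitian.neg fun x => ?_
  rw [star_trivial, neg_mulVec, dotProduct_neg, neg_nonneg]
  exact dotProduct_mulVec_self_nonpos x

theorem submatrix_castLE_eq :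
    P82IntersectionMatrixR.submatrix (Fin.castLE (by norm_num)) (Fin.castLE (by norm_num)) =
      e6IntersectionMatrix := by
  ext i j
  fin_cases i <;> fin_cases j <;> rfl

def radicalBasis : Matrix (Fin 8) (Fin 2) ℝ :=
  !![2, 0; 2, 0; 2, 0; 1, 0; 1, 0; 3, 1; 1, 0; 0, -1]

theorem mul_radicalBasis : P82IntersectionMatrixR * radicalBasis = 0 := by
  ext i j
  fin_cases i <;> fin_cases j <;>
    norm_num [P82IntersectionMatrixR, radicalBasis, mul_apply, Fin.sum_univ_succ]

theorem two_le_rank_radicalBasis : 2 ≤ radicalBasis.rank := by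
  refine radicalBasis.le_rank_of_det_submatrix_ne_zero ![0, 7] id ?_
  rw [det_fin_two]
  simp [radicalBasis]

theorem six_le_rank : 6 ≤ P82IntersectionMatrixR.rank := by
  refine le_rank_of_det_submatrix_ne_zero _ (Fin.castLE (by norm_num)) (Fin.castLE (by norm_num)) ?_
  rw [submatrix_castLE_eq, det_e6IntersectionMatrix]
  norm_num

theorem rank_le_six : P82IntersectionMatrixR.rank ≤ 6 := by
  have h := rank_add_rank_le_card_of_mul_eq_zero mul_radicalBasis
  rw [Fintype.card_fin] at h
  linarith [two_le_rank_radicalBasis]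

end P82IntersectionMatrixR

/-- `−M₀` is positive semidefinite (equivalently `vᵀ M₀ v ≤ 0` for all
`v ∈ ℝ⁸`), and `M₀` has rank 6. -/
theorem stmt8 :
    (-P82IntersectionMatrixR).PosSemidef ∧
    (∀ v : Fin 8 → ℝ, v ⬝ᵥ P82IntersectionMatrixR.mulVec v ≤ 0) ∧
    P82IntersectionMatrixR.rank = 6 :=
  ⟨P82IntersectionMatrixR.neg_posSemidef, P82IntersectionMatrixR.dotProduct_mulVec_self_nonpos,
    le_antisymm P82IntersectionMatrixR.rank_le_six P82IntersectionMatrixR.six_le_rank⟩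
end

section
/- There exist open neighborhoods U and V of the origin in ℝ³ and a C^∞ diffeomorphism Φ : U → V with Φ(0) = 0 such that for every u = (u₁, u₂, u₃) ∈ U, writing (x, y, z) = Φ(u), one has x³ − x z² + y² z + z² = u₁³ − u₂⁴ + u₃². -/
open Real

private lemma sqrtACD : ContDiffOn ℝ (⊤ : ℕ∞) (fun p : ℝ × ℝ × ℝ => Real.sqrt (1 - p.1))
    {p : ℝ × ℝ × ℝ | p.1 < 1} := by
  intro p hp
  have h1 : (1 : ℝ) - p.1 ≠ 0 := by simp only [Set.mem_setOf_eq] at hp; linarith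
  exact ((Real.contDiffAt_sqrt h1).comp p
    ((contDiff_const.sub contDiff_fst).contDiffAt)).contDiffWithinAt

private lemma alg_main (x w y a b : ℝ) (ha0 : a ≠ 0) (ha : a^2 = 1-x) (hb : b^2 = 2*a) :
    x^3 - x*(w/a)^2 + (y*b)^2*(w/a) + (w/a)^2 = x^3 - y^4 + (w+y^2)^2 := by
  have step : x^3 - x*(w/a)^2 + (y*b)^2*(w/a) + (w/a)^2
      = x^3 + (1-x)*(w^2/a^2) + y^2*(b^2)*(w/a) := by ring
  rw [step, ← ha, hb]
  field_simp
  ring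

private lemma alg_linv (w y a b : ℝ) (ha0 : a ≠ 0) (hb : b^2 = 2*a) :
    (w/a)*a + (y*b)^2/(2*a) = w + y^2 := by
  field_simp
  linear_combination (y^2) * hb

private lemma alg_rinv (v2 v3 a b : ℝ) (ha0 : a ≠ 0) (hb0 : b ≠ 0) (hb : b^2 = 2*a) :
    (v3*a + v2^2/(2*a) - (v2/b)^2)/a = v3 := by
  field_simp
  linear_combination (v2^2) * hb

/-- there are open neighborhoods `U`, `V` of the origin in `ℝ³` and a
`C^∞` diffeomorphism `Φ : U → V` fixing the origin such that, with `(x,y,z) = Φ u`,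
`x³ − xz² + y²z + z² = u₁³ − u₂⁴ + u₃²` (reduction of the perturbed `P₈²` function to
the `E₆` normal form). -/
theorem stmt9 :
    ∃ (U V : Set (ℝ × ℝ × ℝ)) (Φ Ψ : ℝ × ℝ × ℝ → ℝ × ℝ × ℝ),
      IsOpen U ∧ IsOpen V ∧ ((0, 0, 0) : ℝ × ℝ × ℝ) ∈ U ∧ ((0, 0, 0) : ℝ × ℝ × ℝ) ∈ V ∧
      ContDiffOn ℝ (⊤ : ℕ∞) Φ U ∧ ContDiffOn ℝ (⊤ : ℕ∞) Ψ V ∧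
      Set.BijOn Φ U V ∧
      (∀ u ∈ U, Ψ (Φ u) = u) ∧ (∀ v ∈ V, Φ (Ψ v) = v) ∧
      Φ (0, 0, 0) = (0, 0, 0) ∧
      (∀ u ∈ U,
        (Φ u).1 ^ 3 - (Φ u).1 * (Φ u).2.2 ^ 2 + (Φ u).2.1 ^ 2 * (Φ u).2.2 + (Φ u).2.2 ^ 2
          = u.1 ^ 3 - u.2.1 ^ 4 + u.2.2 ^ 2) := by
  set U : Set (ℝ × ℝ × ℝ) := {p : ℝ × ℝ × ℝ | p.1 < 1} with hU
  set Φ : ℝ × ℝ × ℝ → ℝ × ℝ × ℝ := fun u =>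
    (u.1, u.2.1 * Real.sqrt (2 * Real.sqrt (1 - u.1)),
      (u.2.2 - u.2.1 ^ 2) / Real.sqrt (1 - u.1)) with hΦ
  set Ψ : ℝ × ℝ × ℝ → ℝ × ℝ × ℝ := fun v =>
    (v.1, v.2.1 / Real.sqrt (2 * Real.sqrt (1 - v.1)),
      v.2.2 * Real.sqrt (1 - v.1) + v.2.1 ^ 2 / (2 * Real.sqrt (1 - v.1))) with hΨ
  have hsq : ∀ p : ℝ × ℝ × ℝ, p ∈ U → 0 < Real.sqrt (1 - p.1) := fun p hp =>
    Real.sqrt_pos.2 (by simp only [hU, Set.mem_setOf_eq] at hp; linarith)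
  have linv : ∀ u ∈ U, Ψ (Φ u) = u := by
    intro u hu
    have h1 := hsq u hu
    have ha0 : Real.sqrt (1 - u.1) ≠ 0 := ne_of_gt h1
    have hb2 : Real.sqrt (2 * Real.sqrt (1 - u.1)) ^ 2 = 2 * Real.sqrt (1 - u.1) :=
      Real.sq_sqrt (by positivity)
    have hb0 : Real.sqrt (2 * Real.sqrt (1 - u.1)) ≠ 0 :=
      ne_of_gt (Real.sqrt_pos.2 (by positivity))
    simp only [hΦ, hΨ]
    refine Prod.ext rfl (Prod.ext ?_ ?_)
    · exact mul_div_cancel_right₀ _ hb0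
    · simp only
      have := alg_linv (u.2.2 - u.2.1 ^ 2) u.2.1 (Real.sqrt (1 - u.1))
        (Real.sqrt (2 * Real.sqrt (1 - u.1))) ha0 hb2
      rw [this]; ring
  have rinv : ∀ v ∈ U, Φ (Ψ v) = v := by
    intro v hv
    have h1 := hsq v hv
    have ha0 : Real.sqrt (1 - v.1) ≠ 0 := ne_of_gt h1
    have hb2 : Real.sqrt (2 * Real.sqrt (1 - v.1)) ^ 2 = 2 * Real.sqrt (1 - v.1) :=
      Real.sq_sqrt (by positivity)
    have hb0 : Real.sqrt (2 * Real.sqrt (1 - v.1)) ≠ 0 :=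
      ne_of_gt (Real.sqrt_pos.2 (by positivity))
    simp only [hΦ, hΨ]
    refine Prod.ext rfl (Prod.ext ?_ ?_)
    · exact div_mul_cancel₀ _ hb0
    · simp only
      have := alg_rinv v.2.1 v.2.2 (Real.sqrt (1 - v.1))
        (Real.sqrt (2 * Real.sqrt (1 - v.1))) ha0 hb0 hb2
      exact this
  refine ⟨U, U, Φ, Ψ, isOpen_lt continuous_fst continuous_const,
    isOpen_lt continuous_fst continuous_const, by simp [hU], by simp [hU],
    ?_, ?_, ?_, linv, rinv, ?_, ?_⟩
  · -- ContDiffOn Φ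
    intro p hp
    have h1 := hsq p hp
    have ha0 : Real.sqrt (1 - p.1) ≠ 0 := ne_of_gt h1
    have h2 : 2 * Real.sqrt (1 - p.1) ≠ 0 := by positivity
    refine ContDiffWithinAt.prodMk (contDiff_fst.contDiffWithinAt) (ContDiffWithinAt.prodMk ?_ ?_)
    · exact (contDiff_fst.comp contDiff_snd).contDiffWithinAt.mul
        (((Real.contDiffAt_sqrt h2).contDiffWithinAt).comp p
          ((contDiffOn_const.mul sqrtACD) p hp) (Set.mapsTo_univ _ _))
    · exact (((contDiff_snd.comp contDiff_snd).sub
          ((contDiff_fst.comp contDiff_snd).pow 2)).contDiffWithinAt).div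
        (sqrtACD p hp) ha0
  · -- ContDiffOn Ψ
    intro p hp
    have h1 := hsq p hp
    have ha0 : Real.sqrt (1 - p.1) ≠ 0 := ne_of_gt h1
    have h2 : 2 * Real.sqrt (1 - p.1) ≠ 0 := by positivity
    have h2' : Real.sqrt (2 * Real.sqrt (1 - p.1)) ≠ 0 :=
      ne_of_gt (Real.sqrt_pos.2 (by positivity))
    refine ContDiffWithinAt.prodMk (contDiff_fst.contDiffWithinAt) (ContDiffWithinAt.prodMk ?_ ?_)
    · exact ((contDiff_fst.comp contDiff_snd).contDiffWithinAt).div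
        (((Real.contDiffAt_sqrt h2).contDiffWithinAt).comp p
          ((contDiffOn_const.mul sqrtACD) p hp) (Set.mapsTo_univ _ _)) h2'
    · exact (((contDiff_snd.comp contDiff_snd).contDiffWithinAt).mul (sqrtACD p hp)).add
        ((((contDiff_fst.comp contDiff_snd).pow 2).contDiffWithinAt).div
          (contDiffOn_const.mul sqrtACD p hp) h2)
  · -- BijOn
    refine Set.InvOn.bijOn ⟨fun u hu => linv u hu, fun v hv => rinv v hv⟩ ?_ ?_
    · intro u hu; simpa [hU, hΦ] using hu
    · intro v hv; simpa [hU, hΨ] using hv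
  · -- Φ 0 = 0
    simp [hΦ]
  · -- the key identity
    intro u hu
    have h1 := hsq u hu
    have ha0 : Real.sqrt (1 - u.1) ≠ 0 := ne_of_gt h1
    have ha2 : Real.sqrt (1 - u.1) ^ 2 = 1 - u.1 := Real.sq_sqrt (by
      simp only [hU, Set.mem_setOf_eq] at hu; linarith)
    have hb2 : Real.sqrt (2 * Real.sqrt (1 - u.1)) ^ 2 = 2 * Real.sqrt (1 - u.1) :=
      Real.sq_sqrt (by positivity)
    simp only [hΦ]
    have := alg_main u.1 (u.2.2 - u.2.1 ^ 2) u.2.1 (Real.sqrt (1 - u.1))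
      (Real.sqrt (2 * Real.sqrt (1 - u.1))) ha0 ha2 hb2
    rw [this]; ring
end

section
/- Let f₁ : ℝ³ → ℝ be defined by f₁(x, y, z) = x³ − x z² + y² z + z². Then the set of critical points of f₁ in ℝ³ is exactly {(0,0,0), (1, 0, √3), (1, 0, −√3)}; the critical point at the origin is degenerate (its Hessian matrix is singular); f₁(1, 0, √3) = f₁(1, 0, −√3) = 1; and the Hessian matrices of f₁ at (1, 0, √3) and (1, 0, −√3) are invertible, with exactly one negative eigenvalue (counted with multiplicity) at (1, 0, √3) and exactly two negative eigenvalues at (1, 0, −√3). -/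
/-- The perturbation `f₁ = x³ − xz² + y²z + z²` of the `P₈²` singularity. -/
noncomputable def f1P82 : ℝ × ℝ × ℝ → ℝ :=
  fun p => p.1 ^ 3 - p.1 * p.2.2 ^ 2 + p.2.1 ^ 2 * p.2.2 + p.2.2 ^ 2

/-- The standard basis of `ℝ³ = ℝ × ℝ × ℝ`. -/
def stdBasis3 : Fin 3 → ℝ × ℝ × ℝ := ![(1, 0, 0), (0, 1, 0), (0, 0, 1)]

/-- The Hessian matrix of second partial derivatives of `f : ℝ³ → ℝ` at `x`. -/
noncomputable def hessian3 (f : ℝ × ℝ × ℝ → ℝ) (x : ℝ × ℝ × ℝ) :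
    Matrix (Fin 3) (Fin 3) ℝ :=
  fun i j => iteratedFDeriv ℝ 2 f x ![stdBasis3 i, stdBasis3 j]

/-- The number of negative eigenvalues (counted with multiplicity, i.e. as roots of the
characteristic polynomial) of a real square matrix. -/
noncomputable def negEigCount {n : ℕ} (M : Matrix (Fin n) (Fin n) ℝ) : ℕ :=
  Multiset.card (M.charpoly.roots.filter fun r => r < 0)

/-!
The gradient of `f₁` is `(3x² − z², 2yz, y² + 2z − 2xz)`, whose only zeros are the three listed
points. At `(1, 0, t)` the Hessian is `[[6, 0, −2t], [0, 2t, 0], [−2t, 0, 0]]`, with determinant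
`−8t³` and characteristic polynomial `(X − 2t)(X² − 6X − 4t²)`. Its eigenvalues are `2t` and
`3 ± √(9 + 4t²)`, and for `t ≠ 0` exactly one of the last two is negative, so the Morse index is
`1` or `2` according to the sign of `t`; take `t = ±√3`.
-/

open Polynomial

def linearForm3 (a b c : ℝ) : ℝ × ℝ × ℝ →L[ℝ] ℝ :=
  a • ContinuousLinearMap.fst ℝ ℝ (ℝ × ℝ)
    + b • (ContinuousLinearMap.fst ℝ ℝ ℝ).comp (ContinuousLinearMap.snd ℝ ℝ (ℝ × ℝ))
    + c • (ContinuousLinearMap.snd ℝ ℝ ℝ).comp (ContinuousLinearMap.snd ℝ ℝ (ℝ × ℝ))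

@[simp]
lemma linearForm3_apply (a b c : ℝ) (v : ℝ × ℝ × ℝ) :
    linearForm3 a b c v = a * v.1 + b * v.2.1 + c * v.2.2 := rfl

lemma linearForm3_eq_zero_iff {a b c : ℝ} : linearForm3 a b c = 0 ↔ a = 0 ∧ b = 0 ∧ c = 0 := by
  refine ⟨fun h => ⟨?_, ?_, ?_⟩, fun ⟨ha, hb, hc⟩ => by ext <;> simp [ha, hb, hc]⟩
  · simpa using congrArg (· (1, 0, 0)) h
  · simpa using congrArg (· (0, 1, 0)) h
  · simpa using congrArg (· (0, 0, 1)) h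

lemma hasFDerivAt_linearForm3 {a b c : ℝ × ℝ × ℝ → ℝ} {x : ℝ × ℝ × ℝ}
    {a₁ a₂ a₃ b₁ b₂ b₃ c₁ c₂ c₃ : ℝ}
    (ha : HasFDerivAt a (linearForm3 a₁ a₂ a₃) x) (hb : HasFDerivAt b (linearForm3 b₁ b₂ b₃) x)
    (hc : HasFDerivAt c (linearForm3 c₁ c₂ c₃) x) :
    HasFDerivAt (fun q => linearForm3 (a q) (b q) (c q))
      ((linearForm3 a₁ a₂ a₃).smulRight (linearForm3 1 0 0)
        + (linearForm3 b₁ b₂ b₃).smulRight (linearForm3 0 1 0)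
        + (linearForm3 c₁ c₂ c₃).smulRight (linearForm3 0 0 1)) x := by
  have hsplit : (fun q => linearForm3 (a q) (b q) (c q))
      = fun q => a q • linearForm3 1 0 0 + b q • linearForm3 0 1 0 + c q • linearForm3 0 0 1 := by
    funext q
    exact ContinuousLinearMap.ext fun v => by simp
  rw [hsplit]
  exact ((ha.smul_const (linearForm3 1 0 0)).add (hb.smul_const (linearForm3 0 1 0))).add
    (hc.smul_const (linearForm3 0 0 1))

lemma hessian3_eq_of_hasFDerivAt {f a b c : ℝ × ℝ × ℝ → ℝ} {x : ℝ × ℝ × ℝ}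
    {a₁ a₂ a₃ b₁ b₂ b₃ c₁ c₂ c₃ : ℝ}
    (hf : ∀ q, HasFDerivAt f (linearForm3 (a q) (b q) (c q)) q)
    (ha : HasFDerivAt a (linearForm3 a₁ a₂ a₃) x) (hb : HasFDerivAt b (linearForm3 b₁ b₂ b₃) x)
    (hc : HasFDerivAt c (linearForm3 c₁ c₂ c₃) x) :
    hessian3 f x = !![a₁, b₁, c₁; a₂, b₂, c₂; a₃, b₃, c₃] := by
  have hD : fderiv ℝ f = fun q => linearForm3 (a q) (b q) (c q) := funext fun q => (hf q).fderiv
  ext i j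
  rw [hessian3, iteratedFDeriv_two_apply, hD, (hasFDerivAt_linearForm3 ha hb hc).fderiv]
  fin_cases i <;> fin_cases j <;> simp [stdBasis3]

lemma negEigCount_eq_card_filter {n : ℕ} {M : Matrix (Fin n) (Fin n) ℝ} {s : Multiset ℝ}
    (h : M.charpoly = (s.map fun a => X - C a).prod) :
    negEigCount M = Multiset.card (s.filter (· < 0)) := by
  rw [negEigCount, h, roots_multiset_prod_X_sub_C]

section coordinates

variable (p : ℝ × ℝ × ℝ)

lemma hasFDerivAt_coord₁ : HasFDerivAt (fun q : ℝ × ℝ × ℝ => q.1) (linearForm3 1 0 0) p :=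
  hasFDerivAt_fst.congr_fderiv (by ext <;> simp)

lemma hasFDerivAt_coord₂ : HasFDerivAt (fun q : ℝ × ℝ × ℝ => q.2.1) (linearForm3 0 1 0) p :=
  (hasFDerivAt_fst.comp p hasFDerivAt_snd).congr_fderiv (by ext <;> simp)

lemma hasFDerivAt_coord₃ : HasFDerivAt (fun q : ℝ × ℝ × ℝ => q.2.2) (linearForm3 0 0 1) p :=
  (hasFDerivAt_snd.comp p hasFDerivAt_snd).congr_fderiv (by ext <;> simp)

end coordinates

lemma hasFDerivAt_f1P82 (p : ℝ × ℝ × ℝ) :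
    HasFDerivAt f1P82
      (linearForm3 (3 * p.1 ^ 2 - p.2.2 ^ 2) (2 * p.2.1 * p.2.2)
        (-(2 * p.1 * p.2.2) + p.2.1 ^ 2 + 2 * p.2.2)) p := by
  have hx := hasFDerivAt_coord₁ p
  have hy := hasFDerivAt_coord₂ p
  have hz := hasFDerivAt_coord₃ p
  refine ((((hx.pow 3).sub (hx.mul (hz.pow 2))).add ((hy.pow 2).mul hz)).add
    (hz.pow 2)).congr_fderiv ?_
  ext <;> simp <;> ring

lemma hessian3_f1P82 (p : ℝ × ℝ × ℝ) : hessian3 f1P82 p =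
    !![6 * p.1, 0, -(2 * p.2.2);
       0, 2 * p.2.2, 2 * p.2.1;
       -(2 * p.2.2), 2 * p.2.1, 2 - 2 * p.1] := by
  have hx := hasFDerivAt_coord₁ p
  have hy := hasFDerivAt_coord₂ p
  have hz := hasFDerivAt_coord₃ p
  refine hessian3_eq_of_hasFDerivAt hasFDerivAt_f1P82 ?_ ?_ ?_
  · exact (((hx.pow 2).const_mul 3).sub (hz.pow 2)).congr_fderiv (by ext <;> simp; ring)
  · exact ((hy.const_mul 2).mul hz).congr_fderiv (by ext <;> simp; ring)
  · exact ((((hx.const_mul 2).mul hz).neg.add (hy.pow 2)).add (hz.const_mul 2)).congr_fderiv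
      (by ext <;> simp <;> ring)

lemma f1P82_critical_equations_iff {x y z : ℝ} :
    (3 * x ^ 2 - z ^ 2 = 0 ∧ 2 * y * z = 0 ∧ -(2 * x * z) + y ^ 2 + 2 * z = 0) ↔
      (x, y, z) = (0, 0, 0) ∨ (x, y, z) = (1, 0, √3) ∨ (x, y, z) = (1, 0, -√3) := by
  have h3 : √3 ^ 2 = 3 := Real.sq_sqrt (by norm_num)
  simp only [Prod.mk.injEq]
  constructor
  · rintro ⟨hx, hyz, hz⟩
    obtain rfl : y = 0 := by
      rcases mul_eq_zero.mp hyz with hy | rfl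
      · linarith
      · nlinarith
    obtain rfl | rfl : z = 0 ∨ x = 1 := by
      have : z * (1 - x) = 0 := by linarith
      exact (mul_eq_zero.mp this).imp id fun h => by linarith
    · left; exact ⟨by nlinarith, rfl, rfl⟩
    · have : (z - √3) * (z + √3) = 0 := by nlinarith
      rcases mul_eq_zero.mp this with h | h
      · right; left; exact ⟨rfl, rfl, by linarith⟩
      · right; right; exact ⟨rfl, rfl, by linarith⟩
  · rintro (⟨rfl, rfl, rfl⟩ | ⟨rfl, rfl, rfl⟩ | ⟨rfl, rfl, rfl⟩) <;> norm_num [h3]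

lemma setOf_fderiv_f1P82_eq_zero : {x : ℝ × ℝ × ℝ | fderiv ℝ f1P82 x = 0}
    = {(0, 0, 0), (1, 0, √3), (1, 0, -√3)} := by
  ext ⟨x, y, z⟩
  simp only [Set.mem_ofPred_eq, (hasFDerivAt_f1P82 _).fderiv, linearForm3_eq_zero_iff,
    Set.mem_insert_iff, Set.mem_singleton_iff]
  exact f1P82_critical_equations_iff

lemma det_hessian3_f1P82 (t : ℝ) : (hessian3 f1P82 (1, 0, t)).det = -8 * t ^ 3 := by
  rw [hessian3_f1P82, Matrix.det_fin_three]
  simp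
  ring

lemma charpoly_hessian3_f1P82 (t : ℝ) : (hessian3 f1P82 (1, 0, t)).charpoly
    = (X - C (2 * t)) * ((X - C (3 + √(9 + 4 * t ^ 2))) * (X - C (3 - √(9 + 4 * t ^ 2)))) := by
  have hr : C (√(9 + 4 * t ^ 2)) ^ 2 = (9 + 4 * C t ^ 2 : ℝ[X]) := by
    rw [← C_pow, Real.sq_sqrt (by positivity)]
    simp [map_ofNat]
  rw [hessian3_f1P82, Matrix.charpoly, Matrix.det_fin_three]
  simp [map_ofNat]
  linear_combination (X - 2 * C t) * hr

lemma negEigCount_hessian3_f1P82 (t : ℝ) :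
    negEigCount (hessian3 f1P82 (1, 0, t)) = Multiset.card
      (({2 * t, 3 + √(9 + 4 * t ^ 2), 3 - √(9 + 4 * t ^ 2)} : Multiset ℝ).filter (· < 0)) :=
  negEigCount_eq_card_filter (by simp [charpoly_hessian3_f1P82])

lemma three_sub_sqrt_neg {t : ℝ} (ht : t ≠ 0) : 3 - √(9 + 4 * t ^ 2) < 0 := by
  have : 3 < √(9 + 4 * t ^ 2) := Real.lt_sqrt_of_sq_lt (by linarith [sq_pos_of_ne_zero ht])
  linarith

lemma negEigCount_hessian3_f1P82_of_pos {t : ℝ} (ht : 0 < t) :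
    negEigCount (hessian3 f1P82 (1, 0, t)) = 1 := by
  have h₁ : ¬ 2 * t < 0 := by linarith
  have h₂ : ¬ 3 + √(9 + 4 * t ^ 2) < 0 := not_lt.mpr (by positivity)
  simp [negEigCount_hessian3_f1P82, Multiset.filter_singleton, h₁, h₂, three_sub_sqrt_neg ht.ne']

lemma negEigCount_hessian3_f1P82_of_neg {t : ℝ} (ht : t < 0) :
    negEigCount (hessian3 f1P82 (1, 0, t)) = 2 := by
  have h₁ : 2 * t < 0 := by linarith
  have h₂ : ¬ 3 + √(9 + 4 * t ^ 2) < 0 := not_lt.mpr (by positivity)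
  simp [negEigCount_hessian3_f1P82, Multiset.filter_singleton, h₁, h₂, three_sub_sqrt_neg ht.ne]

lemma isUnit_det_hessian3_f1P82 {t : ℝ} (ht : t ≠ 0) :
    IsUnit (hessian3 f1P82 (1, 0, t)).det := by
  rw [det_hessian3_f1P82]
  exact isUnit_iff_ne_zero.mpr (by simpa using ht)

/-- the critical points of `f₁` are exactly `(0,0,0)`, `(1,0,√3)`,
`(1,0,−√3)`; the origin is a degenerate critical point; the other two have critical
value `1`, are nondegenerate, and have Morse indices `1` and `2` respectively. -/
theorem stmt10 :
    {x : ℝ × ℝ × ℝ | fderiv ℝ f1P82 x = 0}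
      = {(0, 0, 0), (1, 0, Real.sqrt 3), (1, 0, -Real.sqrt 3)} ∧
    (hessian3 f1P82 (0, 0, 0)).det = 0 ∧
    f1P82 (1, 0, Real.sqrt 3) = 1 ∧ f1P82 (1, 0, -Real.sqrt 3) = 1 ∧
    IsUnit (hessian3 f1P82 (1, 0, Real.sqrt 3)).det ∧
    IsUnit (hessian3 f1P82 (1, 0, -Real.sqrt 3)).det ∧
    negEigCount (hessian3 f1P82 (1, 0, Real.sqrt 3)) = 1 ∧
    negEigCount (hessian3 f1P82 (1, 0, -Real.sqrt 3)) = 2 := by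
  have h3 : √3 ^ 2 = 3 := Real.sq_sqrt (by norm_num)
  have hpos : 0 < √3 := by positivity
  refine ⟨setOf_fderiv_f1P82_eq_zero, ?_, ?_, ?_, isUnit_det_hessian3_f1P82 hpos.ne',
    isUnit_det_hessian3_f1P82 (neg_ne_zero.mpr hpos.ne'),
    negEigCount_hessian3_f1P82_of_pos hpos,
    negEigCount_hessian3_f1P82_of_neg (neg_neg_of_pos hpos)⟩
  · simp [hessian3_f1P82, Matrix.det_fin_three]
  · norm_num [f1P82, h3]
  · norm_num [f1P82, h3]
end

section
/- Let f(x, y, z) = x³ − x z² + y² z. Then: (i) for every (x, y, z) ∈ ℂ³ ∖ {(0,0,0)} with f(x, y, z) = 0, the complex gradient (3x² − z², 2yz, −2xz + y²) is nonzero; and (ii) the set {v ∈ ℝ³ : ‖v‖ = 1 and f(v) = 0} has exactly three connected components. -/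
/-!
The real cone `x³ - xz² + y²z = 0` lies in the union of three closed cones that meet
only at the origin: `x, z ≥ 0, x² + y² ≤ z²`, which contains the oval `y² = u - u³`,
`0 ≤ u ≤ 1`, of the chart `z = 1`; its negative, containing the antipodal oval; and
`z (x + z) ≤ 0`, containing the pseudo-line. On the unit sphere they cut out three disjoint
closed, hence clopen, pieces. Each piece is connected: it is the radial projection of a
connected affine model `{(u, y) | y² = g u}` (two graphs `±√g` meeting at a zero of `g`),
or, for the pseudo-line, the union of two such projections exchanged by `v ↦ -v`.
Over `ℂ` the gradient vanishes only at the origin.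
-/

open Set Function
open scoped Pointwise

theorem Nat.card_connectedComponents_eq_of_isClosed_partition {X ι : Type*}
    [TopologicalSpace X] [Finite ι] {K : ι → Set X} (hclosed : ∀ i, IsClosed (K i))
    (hconn : ∀ i, IsConnected (K i)) (hdisj : Pairwise (Disjoint on K))
    (hcover : ⋃ i, K i = univ) :
    Nat.card (ConnectedComponents X) = Nat.card ι := by
  have hclopen (i : ι) : IsClopen (K i) := by
    refine ⟨hclosed i, ?_⟩
    rw [← isClosed_compl_iff, compl_eq_univ_sdiff, ← hcover, iUnion_sdiff]
    refine isClosed_iUnion_of_finite fun j => ?_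
    rcases eq_or_ne i j with rfl | hij
    · simp
    · simpa only [(hdisj hij.symm).sdiff_eq_left] using hclosed j
  have hcomp (i : ι) {x : X} (hx : x ∈ K i) : connectedComponent x = K i :=
    ((hclopen i).connectedComponent_subset hx).antisymm
      ((hconn i).isPreconnected.subset_connectedComponent hx)
  let base (i : ι) : X := (hconn i).nonempty.some
  have hbase (i : ι) : base i ∈ K i := (hconn i).nonempty.some_mem
  refine (Nat.card_congr (Equiv.ofBijective (fun i => ConnectedComponents.mk (base i))
    ⟨fun i j hij => ?_, fun c => ?_⟩)).symm
  · rw [ConnectedComponents.coe_eq_coe, hcomp i (hbase i), hcomp j (hbase j)] at hij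
    by_contra hne
    exact (hdisj hne).ne_of_mem (hbase i) (hij ▸ hbase i) rfl
  · obtain ⟨x, rfl⟩ := ConnectedComponents.surjective_coe c
    obtain ⟨i, hi⟩ := mem_iUnion.mp (hcover.symm ▸ mem_univ x)
    exact ⟨i, ConnectedComponents.coe_eq_coe.mpr ((hcomp i (hbase i)).trans (hcomp i hi).symm)⟩

theorem Nat.card_connectedComponents_eq_of_isClosed_cover {α ι : Type*} [TopologicalSpace α]
    [Finite ι] {S : Set α} {F : ι → Set α} (hclosed : ∀ i, IsClosed (F i))
    (hconn : ∀ i, IsConnected (S ∩ F i))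
    (hdisj : Pairwise fun i j => Disjoint (S ∩ F i) (S ∩ F j)) (hcover : S ⊆ ⋃ i, F i) :
    Nat.card (ConnectedComponents S) = Nat.card ι := by
  refine Nat.card_connectedComponents_eq_of_isClosed_partition
    (K := fun i => Subtype.val ⁻¹' F i) (fun i => (hclosed i).preimage continuous_subtype_val)
    (fun i => ⟨?_, ?_⟩) (fun i j hij => ?_) ?_
  · obtain ⟨v, hvS, hvF⟩ := (hconn i).nonempty
    exact ⟨⟨v, hvS⟩, hvF⟩
  · rw [← Topology.IsInducing.subtypeVal.isPreconnected_image, Subtype.image_preimage_coe]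
    exact (hconn i).isPreconnected
  · exact disjoint_left.mpr fun p hi hj => (hdisj hij).ne_of_mem ⟨p.2, hi⟩ ⟨p.2, hj⟩ rfl
  · exact eq_univ_of_forall fun p => by simpa using hcover p.2

theorem IsPreconnected.neg {G : Type*} [TopologicalSpace G] [InvolutiveNeg G] [ContinuousNeg G]
    {s : Set G} (hs : IsPreconnected s) : IsPreconnected (-s) := by
  rw [← image_neg_eq_neg]
  exact hs.image _ continuous_neg.continuousOn

theorem isPreconnected_setOf_sq_eq {g : ℝ → ℝ} {a b u₀ : ℝ}
    (hg : ContinuousOn g (Icc a b)) (hg_nonneg : ∀ u ∈ Icc a b, 0 ≤ g u)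
    (hu₀ : u₀ ∈ Icc a b) (hgu₀ : g u₀ = 0) :
    IsPreconnected {p : ℝ × ℝ | p.1 ∈ Icc a b ∧ p.2 ^ 2 = g p.1} := by
  have hbranch (s : ℝ) : IsPreconnected ((fun u => (u, s * √(g u))) '' Icc a b) :=
    isPreconnected_Icc.image _ (continuousOn_id.prodMk
      (continuousOn_const.mul (Real.continuous_sqrt.comp_continuousOn hg)))
  have hmeet (s : ℝ) : (u₀, 0) ∈ (fun u => (u, s * √(g u))) '' Icc a b :=
    ⟨u₀, hu₀, by simp [hgu₀]⟩
  convert (hbranch 1).union (u₀, 0) (hmeet 1) (hmeet (-1)) (hbranch (-1)) using 1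
  ext ⟨u, y⟩
  simp only [mem_ofPred_eq, mem_union, mem_image, Prod.mk.injEq]
  constructor
  · rintro ⟨hu, hy⟩
    have habs : √(g u) = |y| := by rw [← hy, Real.sqrt_sq_eq_abs]
    rcases abs_choice y with h | h
    · exact Or.inl ⟨u, hu, rfl, by rw [habs, h, one_mul]⟩
    · exact Or.inr ⟨u, hu, rfl, by rw [habs, h]; ring⟩
  · rintro (⟨u, hu, rfl, rfl⟩ | ⟨u, hu, rfl, rfl⟩) <;>
      exact ⟨hu, by rw [mul_pow, Real.sq_sqrt (hg_nonneg u hu)]; ring⟩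

theorem isPreconnected_setOf_norm_eq_one_inter_of_cone {E : Type*} [NormedAddCommGroup E]
    [NormedSpace ℝ E] {C A : Set E} (hA : IsPreconnected A) (hA0 : (0 : E) ∉ A) (hAC : A ⊆ C)
    (hC : ∀ c : ℝ, 0 < c → ∀ v ∈ C, c • v ∈ C)
    (hray : ∀ v ∈ C, v ≠ 0 → ∃ a ∈ A, ∃ c : ℝ, 0 < c ∧ v = c • a) :
    IsPreconnected ({v | ‖v‖ = 1} ∩ C) := by
  have hne (a : E) (ha : a ∈ A) : a ≠ 0 := fun h => hA0 (h ▸ ha)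
  convert hA.image (fun v => ‖v‖⁻¹ • v)
    ((continuous_norm.continuousOn.inv₀ fun a ha => norm_ne_zero_iff.mpr (hne a ha)).smul
      continuousOn_id) using 1
  ext v
  constructor
  · rintro ⟨hv1 : ‖v‖ = 1, hv⟩
    obtain ⟨a, ha, c, hc, rfl⟩ := hray v hv (by rintro rfl; simp at hv1)
    refine ⟨a, ha, ?_⟩
    rw [norm_smul, Real.norm_of_nonneg hc.le] at hv1
    rw [eq_inv_of_mul_eq_one_left hv1]
  · rintro ⟨a, ha, rfl⟩
    exact ⟨norm_smul_inv_norm (hne a ha),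
      hC _ (inv_pos.mpr (norm_pos_iff.mpr (hne a ha))) a (hAC ha)⟩

local notation "ℝ³" => EuclideanSpace ℝ (Fin 3)

namespace CubicP8

theorem eq_zero_of_grad_eq_zero {K : Type*} [Field K] (h2 : (2 : K) ≠ 0) (h3 : (3 : K) ≠ 0)
    {x y z : K} (hx : 3 * x ^ 2 - z ^ 2 = 0) (hy : 2 * y * z = 0) (hz : -2 * x * z + y ^ 2 = 0) :
    x = 0 ∧ y = 0 ∧ z = 0 := by
  rcases eq_or_ne z 0 with rfl | hz0
  · have hx0 : x = 0 := by simpa [h3] using hx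
    subst hx0
    simpa using hz
  · have hy0 : y = 0 := by simpa [h2, hz0] using hy
    subst hy0
    have hx0 : x = 0 := by simpa [h2, hz0] using hz
    subst hx0
    exact absurd (by simpa using hx) hz0

def cubic (v : ℝ³) : ℝ := v 0 ^ 3 - v 0 * v 2 ^ 2 + v 1 ^ 2 * v 2

theorem cubic_smul (c : ℝ) (v : ℝ³) : cubic (c • v) = c ^ 3 * cubic v := by
  simp only [cubic, PiLp.smul_apply, smul_eq_mul]
  ring

theorem cubic_smul_eq_zero (c : ℝ) {v : ℝ³} (hv : cubic v = 0) : cubic (c • v) = 0 := by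
  rw [cubic_smul, hv, mul_zero]

theorem cubic_neg (v : ℝ³) : cubic (-v) = -cubic v := by
  simp only [cubic, PiLp.neg_apply]
  ring

theorem norm_sq_eq (v : ℝ³) : ‖v‖ ^ 2 = v 0 ^ 2 + v 1 ^ 2 + v 2 ^ 2 := by
  simp [EuclideanSpace.norm_sq_eq, Fin.sum_univ_three]

theorem eq_smul_toLp_iff {v : ℝ³} {c a b d : ℝ} :
    v = c • !₂[a, b, d] ↔ v 0 = c * a ∧ v 1 = c * b ∧ v 2 = c * d := by
  constructor
  · rintro rfl
    simp
  · rintro ⟨h0, h1, h2⟩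
    ext i
    fin_cases i <;> simp [h0, h1, h2]

def sphereZeros : Set ℝ³ := {v | ‖v‖ = 1} ∩ {v | cubic v = 0}

theorem neg_mem_sphereZeros {v : ℝ³} : -v ∈ sphereZeros ↔ v ∈ sphereZeros := by
  simp [sphereZeros, cubic_neg]

def ovalCone : Set ℝ³ := {v | 0 ≤ v 0 ∧ 0 ≤ v 2 ∧ v 0 ^ 2 + v 1 ^ 2 ≤ v 2 ^ 2}

def lineCone : Set ℝ³ := {v | v 2 * (v 0 + v 2) ≤ 0}

theorem isClosed_ovalCone : IsClosed ovalCone := by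
  simp only [ovalCone, ofPred_and]
  exact (isClosed_le (by fun_prop) (by fun_prop)).inter
    ((isClosed_le (by fun_prop) (by fun_prop)).inter (isClosed_le (by fun_prop) (by fun_prop)))

theorem isClosed_lineCone : IsClosed lineCone :=
  isClosed_le (by fun_prop) continuous_const

theorem neg_mem_lineCone {v : ℝ³} : -v ∈ lineCone ↔ v ∈ lineCone := by
  simp only [lineCone, mem_ofPred_eq, PiLp.neg_apply]
  ring_nf

theorem smul_mem_ovalCone {c : ℝ} (hc : 0 < c) {v : ℝ³} (hv : v ∈ ovalCone) :
    c • v ∈ ovalCone := by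
  obtain ⟨hx, hz, hxyz⟩ := hv
  simp only [ovalCone, mem_ofPred_eq, PiLp.smul_apply, smul_eq_mul, mul_pow]
  refine ⟨by positivity, by positivity, ?_⟩
  nlinarith [sq_nonneg c]

theorem smul_mem_lineCone {c : ℝ} {v : ℝ³} (hv : v ∈ lineCone) : c • v ∈ lineCone := by
  simp only [lineCone, mem_ofPred_eq, PiLp.smul_apply, smul_eq_mul] at hv ⊢
  nlinarith [sq_nonneg c]

theorem eq_zero_of_mem_ovalCone {v : ℝ³} (hv : v ∈ ovalCone) (hz : v 2 = 0) : v = 0 := by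
  obtain ⟨-, -, hxyz⟩ := hv
  rw [← norm_eq_zero, ← sq_eq_zero_iff, norm_sq_eq]
  nlinarith [sq_nonneg (v 0), sq_nonneg (v 1)]

theorem ovalCone_inter_lineCone_subset : ovalCone ∩ lineCone ⊆ {0} := by
  rintro v ⟨hv, hline⟩
  refine eq_zero_of_mem_ovalCone hv ?_
  obtain ⟨hx, hz, -⟩ := hv
  nlinarith [hline.out]

theorem ovalCone_inter_neg_subset : ovalCone ∩ -ovalCone ⊆ {0} := by
  rintro v ⟨hv, hneg⟩
  refine eq_zero_of_mem_ovalCone hv ?_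
  have hz : 0 ≤ -v 2 := hneg.2.1
  linarith [hv.2.1]

theorem mem_ovalCone_of_pos {v : ℝ³} (hv : cubic v = 0) (hz : 0 < v 2) (hxz : 0 < v 0 + v 2) :
    v ∈ ovalCone := by
  have hy : v 1 ^ 2 * v 2 = v 0 * (v 2 - v 0) * (v 2 + v 0) := by
    unfold cubic at hv
    linear_combination hv
  have hx : 0 ≤ v 0 := by
    by_contra! hx
    nlinarith [mul_pos (mul_pos (neg_pos.mpr hx) (by linarith : 0 < v 2 - v 0)) hxz,
      mul_nonneg (sq_nonneg (v 1)) hz.le]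
  refine ⟨hx, hz.le, ?_⟩
  have hcone : (v 0 ^ 2 + v 1 ^ 2 - v 2 ^ 2) * v 2 = -((v 2 - v 0) ^ 2 * (v 2 + v 0)) := by
    linear_combination hy
  nlinarith [mul_nonneg (sq_nonneg (v 2 - v 0)) hxz.le]

theorem mem_ovalCone_or_neg_mem_ovalCone_or_mem_lineCone {v : ℝ³} (hv : cubic v = 0) :
    v ∈ ovalCone ∨ -v ∈ ovalCone ∨ v ∈ lineCone := by
  by_cases hline : v 2 * (v 0 + v 2) ≤ 0
  · exact Or.inr (Or.inr hline)
  rcases pos_and_pos_or_neg_and_neg_of_mul_pos (not_le.mp hline) with ⟨hz, hxz⟩ | ⟨hz, hxz⟩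
  · exact Or.inl (mem_ovalCone_of_pos hv hz hxz)
  · refine Or.inr (Or.inl (mem_ovalCone_of_pos (by rw [cubic_neg, hv, neg_zero]) ?_ ?_)) <;>
      simp only [PiLp.neg_apply] <;> linarith

/-- The oval in the chart `z = 1`, with `u = x / z`. -/
def ovalCurve : Set (ℝ × ℝ) := {p | p.1 ∈ Icc 0 1 ∧ p.2 ^ 2 = p.1 - p.1 ^ 3}

def ovalChart (p : ℝ × ℝ) : ℝ³ := !₂[p.1, p.2, 1]

/-- In the chart `x = -1` the pseudo-line is `Y² Z = 1 - Z²`; substituting `Z = t²` and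
rescaling by `t` gives this curve, which also reaches the point at infinity `t = 0`. -/
def lineCurve : Set (ℝ × ℝ) := {p | p.1 ∈ Icc 0 1 ∧ p.2 ^ 2 = 1 - p.1 ^ 4}

def lineChart (p : ℝ × ℝ) : ℝ³ := !₂[-p.1, p.2, p.1 ^ 3]

theorem continuous_ovalChart : Continuous ovalChart := by
  unfold ovalChart
  fun_prop

theorem continuous_lineChart : Continuous lineChart := by
  unfold lineChart
  fun_prop

theorem ovalChart_ne_zero (p : ℝ × ℝ) : ovalChart p ≠ 0 := fun h => by
  simpa [ovalChart] using congrArg (· 2) h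

theorem lineChart_ne_zero {p : ℝ × ℝ} (hp : p ∈ lineCurve) : lineChart p ≠ 0 := fun h => by
  have ht : p.1 = 0 := by simpa [lineChart] using congrArg (· 0) h
  have hy : p.2 = 0 := by simpa [lineChart] using congrArg (· 1) h
  simpa [ht, hy] using hp.2

theorem isPreconnected_ovalCurve : IsPreconnected ovalCurve :=
  isPreconnected_setOf_sq_eq (g := fun u => u - u ^ 3) (by fun_prop)
    (fun u ⟨hu0, hu1⟩ => by
      nlinarith [mul_nonneg (mul_nonneg hu0 (sub_nonneg.2 hu1)) (by linarith : 0 ≤ 1 + u)])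
    (left_mem_Icc.mpr zero_le_one) (by norm_num)

theorem isPreconnected_lineCurve : IsPreconnected lineCurve :=
  isPreconnected_setOf_sq_eq (g := fun t => 1 - t ^ 4) (by fun_prop)
    (fun t ⟨ht0, ht1⟩ => by simpa using pow_le_one₀ ht0 ht1)
    (right_mem_Icc.mpr zero_le_one) (by norm_num)

theorem ovalChart_mem {p : ℝ × ℝ} (hp : p ∈ ovalCurve) :
    ovalChart p ∈ {v | cubic v = 0} ∩ ovalCone := by
  obtain ⟨⟨hu0, hu1⟩, hy⟩ := hp
  simp only [ovalChart, cubic, ovalCone, mem_inter_iff, mem_ofPred_eq, Fin.isValue,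
    Matrix.cons_val_zero, Matrix.cons_val, one_pow, mul_one, Matrix.cons_val_one, zero_le_one,
    true_and]
  refine ⟨by linear_combination hy, hu0, ?_⟩
  nlinarith [mul_nonneg (sq_nonneg (1 - p.1)) (by linarith : (0 : ℝ) ≤ 1 + p.1)]

theorem lineChart_mem {p : ℝ × ℝ} (hp : p ∈ lineCurve) :
    lineChart p ∈ {v | cubic v = 0} ∩ (lineCone ∩ {v | 0 ≤ v 2}) := by
  obtain ⟨⟨ht0, ht1⟩, hy⟩ := hp
  simp only [lineChart, cubic, lineCone, mem_inter_iff, mem_ofPred_eq, Fin.isValue,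
    Matrix.cons_val_zero, Matrix.cons_val, neg_mul, sub_neg_eq_add, Matrix.cons_val_one]
  refine ⟨by linear_combination p.1 ^ 3 * hy, ?_, by positivity⟩
  nlinarith [pow_le_one₀ ht0 ht1 (n := 2), pow_nonneg ht0 4]

theorem exists_eq_smul_ovalChart {v : ℝ³} (hv : cubic v = 0) (hcone : v ∈ ovalCone)
    (hv0 : v ≠ 0) : ∃ p ∈ ovalCurve, ∃ c : ℝ, 0 < c ∧ v = c • ovalChart p := by
  obtain ⟨hx, hz, hxyz⟩ := hcone
  have hz : 0 < v 2 := hz.lt_of_ne fun h => hv0 (eq_zero_of_mem_ovalCone ⟨hx, hz, hxyz⟩ h.symm)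
  have hxz : v 0 ≤ v 2 := by nlinarith
  refine ⟨(v 0 / v 2, v 1 / v 2), ⟨⟨div_nonneg hx hz.le, (div_le_one hz).2 hxz⟩, ?_⟩,
    v 2, hz, eq_smul_toLp_iff.mpr ⟨by field_simp, by field_simp, by simp⟩⟩
  simp only [cubic] at hv
  field_simp
  linear_combination hv

theorem exists_eq_smul_lineChart {v : ℝ³} (hv : cubic v = 0) (hline : v ∈ lineCone)
    (hz : 0 ≤ v 2) (hv0 : v ≠ 0) :
    ∃ p ∈ lineCurve, ∃ c : ℝ, 0 < c ∧ v = c • lineChart p := by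
  simp only [cubic, lineCone, mem_ofPred_eq] at hv hline
  rcases hz.eq_or_lt with hz | hz
  · have hx : v 0 = 0 := by simpa [← hz] using hv
    have hy : v 1 ≠ 0 := fun hy => hv0 (by ext i; fin_cases i <;> simp [hx, hy, ← hz])
    refine ⟨(0, v 1 / |v 1|), ⟨left_mem_Icc.mpr zero_le_one, by simp [div_pow, hy]⟩,
      |v 1|, abs_pos.mpr hy,
      eq_smul_toLp_iff.mpr ⟨by simp [hx], by field_simp, by simp [← hz]⟩⟩
  · have hx : 0 < -v 0 := by nlinarith
    have hx0 : v 0 ≠ 0 := by linarith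
    have hzx : 0 < v 2 / -v 0 := div_pos hz hx
    set t := √(v 2 / -v 0)
    have ht : 0 < t := Real.sqrt_pos.mpr hzx
    have ht2 : t ^ 2 = v 2 / -v 0 := Real.sq_sqrt hzx.le
    have ht1 : t ≤ 1 := Real.sqrt_le_one.mpr ((div_le_one hx).2 (by nlinarith))
    refine ⟨(t, v 1 * t / -v 0), ⟨⟨ht.le, ht1⟩, ?_⟩, -v 0 / t, div_pos hx ht,
      eq_smul_toLp_iff.mpr ⟨by field_simp, by field_simp, ?_⟩⟩
    · show (v 1 * t / -v 0) ^ 2 = 1 - t ^ 4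
      rw [show t ^ 4 = (t ^ 2) ^ 2 by ring, div_pow, mul_pow, ht2]
      field_simp
      linear_combination -hv
    · rw [show t ^ 3 = t * t ^ 2 by ring, ht2]
      field_simp

theorem isPreconnected_sphereZeros_inter_ovalCone :
    IsPreconnected (sphereZeros ∩ ovalCone) := by
  rw [sphereZeros, inter_assoc]
  refine isPreconnected_setOf_norm_eq_one_inter_of_cone
    (isPreconnected_ovalCurve.image _ continuous_ovalChart.continuousOn)
    (fun ⟨p, _, hp⟩ => ovalChart_ne_zero p hp) (image_subset_iff.mpr fun _ => ovalChart_mem)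
    ?_ ?_
  · rintro c hc v ⟨hv, hcone⟩
    exact ⟨cubic_smul_eq_zero c hv, smul_mem_ovalCone hc hcone⟩
  · rintro v ⟨hv, hcone⟩ hv0
    obtain ⟨p, hp, c, hc, rfl⟩ := exists_eq_smul_ovalChart hv hcone hv0
    exact ⟨_, mem_image_of_mem _ hp, c, hc, rfl⟩

theorem isPreconnected_sphereZeros_inter_lineCone_inter_upper :
    IsPreconnected (sphereZeros ∩ (lineCone ∩ {v | 0 ≤ v 2})) := by
  rw [sphereZeros, inter_assoc]
  refine isPreconnected_setOf_norm_eq_one_inter_of_cone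
    (isPreconnected_lineCurve.image _ continuous_lineChart.continuousOn)
    (fun ⟨_, hp, h⟩ => lineChart_ne_zero hp h) (image_subset_iff.mpr fun _ => lineChart_mem)
    ?_ ?_
  · rintro c hc v ⟨hv, hline, hz⟩
    exact ⟨cubic_smul_eq_zero c hv, smul_mem_lineCone hline,
      show 0 ≤ c * v 2 from mul_nonneg hc.le hz⟩
  · rintro v ⟨hv, hline, hz⟩ hv0
    obtain ⟨p, hp, c, hc, rfl⟩ := exists_eq_smul_lineChart hv hline hz hv0
    exact ⟨_, mem_image_of_mem _ hp, c, hc, rfl⟩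

theorem isPreconnected_sphereZeros_inter_lineCone : IsPreconnected (sphereZeros ∩ lineCone) := by
  have hpole : !₂[0, 1, 0] ∈ sphereZeros ∩ (lineCone ∩ {v | 0 ≤ v 2}) := by
    simp [sphereZeros, lineCone, cubic, EuclideanSpace.norm_eq, Fin.sum_univ_three]
  have hupper := isPreconnected_sphereZeros_inter_lineCone_inter_upper
  convert hupper.union' ⟨_, hpole, ?_⟩ hupper.neg using 1
  · ext v
    simp only [mem_union, mem_inter_iff, mem_neg, neg_mem_sphereZeros, neg_mem_lineCone,
      mem_ofPred_eq, PiLp.neg_apply, neg_nonneg]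
    have := le_total 0 (v 2)
    tauto
  · exact mem_neg.mpr
      ⟨neg_mem_sphereZeros.mpr hpole.1, neg_mem_lineCone.mpr hpole.2.1, by simp⟩

theorem isPreconnected_sphereZeros_inter_neg_ovalCone :
    IsPreconnected (sphereZeros ∩ -ovalCone) := by
  convert isPreconnected_sphereZeros_inter_ovalCone.neg using 1
  ext v
  simp [neg_mem_sphereZeros]

def separatingCones : Fin 3 → Set ℝ³ := ![ovalCone, -ovalCone, lineCone]

theorem separatingCones_inter_subset {i j : Fin 3} (hij : i ≠ j) :
    separatingCones i ∩ separatingCones j ⊆ {0} := by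
  rintro v ⟨hi, hj⟩
  fin_cases i <;> fin_cases j
  all_goals first
    | exact (hij rfl).elim
    | exact ovalCone_inter_neg_subset ⟨hi, hj⟩
    | exact ovalCone_inter_neg_subset ⟨hj, hi⟩
    | exact ovalCone_inter_lineCone_subset ⟨hi, hj⟩
    | exact ovalCone_inter_lineCone_subset ⟨hj, hi⟩
    | exact neg_eq_zero.mp (ovalCone_inter_lineCone_subset ⟨hi, neg_mem_lineCone.mpr hj⟩)
    | exact neg_eq_zero.mp (ovalCone_inter_lineCone_subset ⟨hj, neg_mem_lineCone.mpr hi⟩)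

theorem isConnected_sphereZeros_inter_separatingCones (i : Fin 3) :
    IsConnected (sphereZeros ∩ separatingCones i) := by
  fin_cases i
  · exact ⟨⟨!₂[0, 0, 1], by simp [separatingCones, sphereZeros, ovalCone, cubic,
      EuclideanSpace.norm_eq, Fin.sum_univ_three]⟩, isPreconnected_sphereZeros_inter_ovalCone⟩
  · exact ⟨⟨!₂[0, 0, -1], by simp [separatingCones, sphereZeros, ovalCone, cubic,
      EuclideanSpace.norm_eq, Fin.sum_univ_three]⟩,
      isPreconnected_sphereZeros_inter_neg_ovalCone⟩
  · exact ⟨⟨!₂[0, 1, 0], by simp [separatingCones, sphereZeros, lineCone, cubic,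
      EuclideanSpace.norm_eq, Fin.sum_univ_three]⟩, isPreconnected_sphereZeros_inter_lineCone⟩

theorem card_connectedComponents_sphereZeros :
    Nat.card (ConnectedComponents sphereZeros) = 3 := by
  refine (Nat.card_connectedComponents_eq_of_isClosed_cover (F := separatingCones) (fun i => ?_)
    isConnected_sphereZeros_inter_separatingCones (fun i j hij => ?_) ?_).trans (Nat.card_fin 3)
  · fin_cases i
    exacts [isClosed_ovalCone, isClosed_ovalCone.neg, isClosed_lineCone]
  · refine disjoint_left.mpr ?_
    rintro v ⟨hvS, hi⟩ ⟨-, hj⟩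
    have hv0 : v = 0 := separatingCones_inter_subset hij ⟨hi, hj⟩
    simp [hv0, sphereZeros] at hvS
  · intro v hv
    rcases mem_ovalCone_or_neg_mem_ovalCone_or_mem_lineCone hv.2 with h | h | h
    exacts [mem_iUnion.mpr ⟨0, h⟩, mem_iUnion.mpr ⟨1, h⟩, mem_iUnion.mpr ⟨2, h⟩]

end CubicP8

/-- the cubic `f = x³ − xz² + y²z` (representative of `P₈²`) is
nondegenerate — its complex gradient does not vanish on its complex zero set away from
the origin — and its real zero set on the unit sphere in `ℝ³` has exactly three
connected components. -/
theorem stmt13 :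
    (∀ x y z : ℂ, (x, y, z) ≠ ((0 : ℂ), (0 : ℂ), (0 : ℂ)) →
      x ^ 3 - x * z ^ 2 + y ^ 2 * z = 0 →
      (3 * x ^ 2 - z ^ 2, 2 * y * z, -2 * x * z + y ^ 2) ≠ ((0 : ℂ), (0 : ℂ), (0 : ℂ))) ∧
    Nat.card (ConnectedComponents
      {v : EuclideanSpace ℝ (Fin 3) //
        ‖v‖ = 1 ∧ (v 0) ^ 3 - v 0 * (v 2) ^ 2 + (v 1) ^ 2 * v 2 = 0}) = 3 := by
  refine ⟨fun x y z hne _ hgrad => hne ?_, CubicP8.card_connectedComponents_sphereZeros⟩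
  simp only [Prod.mk.injEq] at hgrad ⊢
  exact CubicP8.eq_zero_of_grad_eq_zero two_ne_zero three_ne_zero hgrad.1 hgrad.2.1 hgrad.2.2
end
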